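/- arXiv:2203.15906 — 7 statements merged into one kernel-verified Lean document; each statement's English description precedes it below -/
import Mathlib

section
/- The hyperspace C(S¹) of subcontinua of the unit circle, with the Hausdorff metric, is homeomorphic to the closed unit disk in the plane. -/
open Metric TopologicalSpace

/-- The unit circle in the Euclidean plane. -/
noncomputable abbrev UnitCircle : Set (EuclideanSpace ℝ (Fin 2)) :=
  Metric.sphere (0 : EuclideanSpace ℝ (Fin 2)) 1

/-- The hyperspace of subcontinua of the unit circle, with the Hausdorff metric. -/
def HyperspaceCircle : Type :=
  { K : NonemptyCompacts UnitCircle // IsConnected (K : Set UnitCircle) }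

noncomputable instance : MetricSpace HyperspaceCircle :=
  Subtype.metricSpace

/-!
Every subcontinuum of the circle other than the circle itself is an arc `u · exp (i [-α, α])`
with `‖u‖ = 1` and `0 ≤ α < π`, and `u`, `α` are determined by it: after a rotation taking a
point outside the subcontinuum to `-1`, `arg` is continuous on it and maps it onto an interval.
Hence `z ↦` (the arc centred at `z / ‖z‖` of half-width `π (1 - ‖z‖)`, the whole circle for
`z = 0`) is a bijection from the closed disk onto `C(S¹)`. It is continuous because the Hausdorff
distance between two arcs is at most `‖u - v‖ + |α - β|`, and a continuous bijection from a
compact space onto a metric space is a homeomorphism.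
-/

open Complex Filter Function Set Topology
open scoped Real

def subcontinua {X : Type*} [TopologicalSpace X] (S : Set X) : Set (Set X) :=
  {A | A ⊆ S ∧ IsCompact A ∧ IsConnected A}

theorem Homeomorph.image_mem_subcontinua_iff {X Y : Type*} [TopologicalSpace X]
    [TopologicalSpace Y] (e : X ≃ₜ Y) {S A : Set X} :
    e '' A ∈ subcontinua (e '' S) ↔ A ∈ subcontinua S := by
  simp only [subcontinua, mem_ofPred_eq, image_subset_image_iff e.injective, e.isCompact_image,
    e.isConnected_image]

theorem Homeomorph.bijOn_image_subcontinua {X Y : Type*} [TopologicalSpace X]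
    [TopologicalSpace Y] (e : X ≃ₜ Y) (S : Set X) :
    BijOn (Set.image e) (subcontinua S) (subcontinua (e '' S)) := by
  refine ⟨fun A hA => e.image_mem_subcontinua_iff.2 hA, e.injective.image_injective.injOn,
    fun A hA => ⟨e ⁻¹' A, ?_, image_preimage_eq A e.surjective⟩⟩
  rwa [← e.image_mem_subcontinua_iff, image_preimage_eq A e.surjective]

theorem isConnected_image_val_iff {X : Type*} [TopologicalSpace X] {S : Set X} {A : Set S} :
    IsConnected (Subtype.val '' A) ↔ IsConnected A := by
  simp only [IsConnected, image_nonempty, Topology.IsInducing.subtypeVal.isPreconnected_image]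

theorem image_val_preimage_val {X : Type*} {S A : Set X} (hA : A ⊆ S) :
    Subtype.val '' (Subtype.val ⁻¹' A : Set S) = A := by
  rw [Subtype.image_preimage_coe, inter_eq_right.2 hA]

def subcontinuaEquiv {X : Type*} [TopologicalSpace X] (S : Set X) :
    subcontinua S ≃ {K : NonemptyCompacts S // IsConnected (K : Set S)} where
  toFun A :=
    have hcompact : IsCompact (Subtype.val ⁻¹' A.1 : Set S) := by
      rw [Subtype.isCompact_iff, image_val_preimage_val A.2.1]; exact A.2.2.1
    have hconn : IsConnected (Subtype.val ⁻¹' A.1 : Set S) := by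
      rw [← isConnected_image_val_iff, image_val_preimage_val A.2.1]; exact A.2.2.2
    ⟨⟨⟨_, hcompact⟩, hconn.nonempty⟩, hconn⟩
  invFun K := ⟨Subtype.val '' (K : Set S), Subtype.coe_image_subset _ _,
    Subtype.isCompact_iff.1 K.1.isCompact, isConnected_image_val_iff.2 K.2⟩
  left_inv A := Subtype.ext (image_val_preimage_val A.2.1)
  right_inv K := Subtype.ext <| NonemptyCompacts.ext <|
    preimage_image_eq _ Subtype.val_injective

theorem dist_subcontinuaEquiv {X : Type*} [MetricSpace X] {S : Set X} (A B : subcontinua S) :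
    dist (subcontinuaEquiv S A) (subcontinuaEquiv S B) = hausdorffDist (A : Set X) B := by
  rw [Subtype.dist_eq, NonemptyCompacts.dist_eq, ← hausdorffDist_image isometry_subtype_coe]
  exact congrArg₂ hausdorffDist (image_val_preimage_val A.2.1) (image_val_preimage_val B.2.1)

theorem nonempty_homeomorph_of_bijOn_subcontinua {X Z : Type*} [MetricSpace X]
    [TopologicalSpace Z] {S : Set X} {s : Set Z} (hs : IsCompact s) {F : Z → Set X}
    (hF : BijOn F s (subcontinua S))
    (hcont : ∀ z ∈ s, Tendsto (fun w => hausdorffDist (F w) (F z)) (𝓝[s] z) (𝓝 0)) :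
    Nonempty ({K : NonemptyCompacts S // IsConnected (K : Set S)} ≃ₜ s) := by
  have : CompactSpace s := isCompact_iff_compactSpace.mp hs
  let Φ := (hF.equiv F).trans (subcontinuaEquiv S)
  have hΦ : Continuous Φ := continuous_iff_continuousAt.2 fun z => by
    rw [ContinuousAt, tendsto_iff_dist_tendsto_zero]
    simp only [Φ, Equiv.trans_apply, dist_subcontinuaEquiv]
    exact (hcont z z.2).comp (tendsto_nhdsWithin_iff.2
      ⟨continuous_subtype_val.continuousAt, Eventually.of_forall fun w => w.2⟩)
  exact ⟨hΦ.homeoOfEquivCompactToT2.symm⟩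

theorem abs_sub_clamp_le {s a b : ℝ} (hs : |s| ≤ a) (hb : 0 ≤ b) :
    |s - max (-b) (min b s)| ≤ |a - b| := by
  rw [abs_le] at hs
  have := le_abs_self (a - b)
  rcases le_total s b with h₁ | h₁
  · rw [min_eq_right h₁]
    rcases le_total (-b) s with h₂ | h₂
    · rw [max_eq_right h₂, sub_self, abs_zero]
      exact abs_nonneg _
    · rw [max_eq_left h₂, abs_le]
      constructor <;> linarith
  · rw [min_eq_left h₁, max_eq_right (by linarith), abs_le]
    constructor <;> linarith

section ComplexCircle

variable {u v z w : ℂ} {α β : ℝ}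

def circleArc (u : ℂ) (α : ℝ) : Set ℂ := (fun t : ℝ => u * exp (t * I)) '' Icc (-α) α

theorem arg_exp_ofReal_mul_I {t : ℝ} (h₁ : -π < t) (h₂ : t ≤ π) : arg (exp (t * I)) = t := by
  rw [exp_mul_I, arg_cos_add_sin_mul_I ⟨h₁, h₂⟩]

theorem exp_arg_mul_I (hz : z ≠ 0) : exp (arg z * I) = z / ‖z‖ := by
  rw [eq_div_iff (by simpa using hz), mul_comm, norm_mul_exp_arg_mul_I]

theorem exp_arg_mul_I_of_norm_eq_one (hz : ‖z‖ = 1) : exp (arg z * I) = z := by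
  simpa [hz] using norm_mul_exp_arg_mul_I z

theorem dist_exp_ofReal_mul_I_le (s t : ℝ) : dist (exp (s * I)) (exp (t * I)) ≤ |s - t| := by
  simpa [circleMap_zero, Real.dist_eq] using (lipschitzWith_circleMap 0 1).dist_le_mul s t

theorem arg_image_exp_Icc {a b : ℝ} (ha : -π < a) (hb : b ≤ π) :
    arg '' ((fun t : ℝ => exp (t * I)) '' Icc a b) = Icc a b := by
  rw [image_image, image_congr fun t ht => arg_exp_ofReal_mul_I (ha.trans_le ht.1) (ht.2.trans hb),
    image_id']

theorem circleArc_exp (θ α : ℝ) :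
    circleArc (exp (θ * I)) α = (fun t : ℝ => exp (t * I)) '' Icc (θ - α) (θ + α) := by
  rw [circleArc, sub_eq_add_neg, ← image_const_add_Icc, image_image]
  simp only [← exp_add, ofReal_add, add_mul]

theorem image_mul_circleArc (w u : ℂ) (α : ℝ) :
    (w * ·) '' circleArc u α = circleArc (w * u) α := by
  simp only [circleArc, image_image, mul_assoc]

theorem circleArc_subset_sphere (hu : ‖u‖ = 1) : circleArc u α ⊆ sphere 0 1 := by
  rintro _ ⟨t, -, rfl⟩
  simp [hu]

theorem isCompact_circleArc : IsCompact (circleArc u α) :=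
  isCompact_Icc.image (by fun_prop)

theorem isConnected_circleArc (hα : 0 ≤ α) : IsConnected (circleArc u α) :=
  (isConnected_Icc (by linarith)).image _ (by fun_prop)

theorem circleArc_pi (hu : ‖u‖ = 1) : circleArc u π = sphere 0 1 := by
  refine (circleArc_subset_sphere hu).antisymm fun x hx => ?_
  have hu0 : u ≠ 0 := by rintro rfl; simp at hu
  have hxu : ‖x / u‖ = 1 := by simp_all
  refine ⟨arg (x / u), ⟨(neg_pi_lt_arg _).le, arg_le_pi _⟩, ?_⟩
  simp only [exp_arg_mul_I_of_norm_eq_one hxu, mul_div_cancel₀ _ hu0]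

theorem neg_notMem_circleArc (hu : ‖u‖ = 1) (hα : α < π) : -u ∉ circleArc u α := by
  have hu0 : u ≠ 0 := by rintro rfl; simp at hu
  rintro ⟨t, ht, h⟩
  have hexp : exp (t * I) = -1 := mul_left_cancel₀ hu0 (by simpa using h)
  have := arg_exp_ofReal_mul_I (t := t) (by linarith [ht.1]) (by linarith [ht.2])
  rw [hexp, arg_neg_one] at this
  linarith [ht.2]

theorem exists_mem_circleArc_dist_le (hv : ‖v‖ = 1) (hβ : 0 ≤ β) {x : ℂ}
    (hx : x ∈ circleArc u α) : ∃ y ∈ circleArc v β, dist x y ≤ ‖u - v‖ + |α - β| := by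
  obtain ⟨s, hs, rfl⟩ := hx
  set s' := max (-β) (min β s)
  have hs' : s' ∈ Icc (-β) β := ⟨le_max_left _ _, max_le (by linarith) (min_le_left _ _)⟩
  refine ⟨_, ⟨s', hs', rfl⟩, ?_⟩
  calc dist (u * exp (s * I)) (v * exp (s' * I))
      = ‖(u - v) * exp (s * I) + v * (exp (s * I) - exp (s' * I))‖ := by
        rw [dist_eq_norm]; ring_nf
    _ ≤ ‖u - v‖ + dist (exp (s * I)) (exp (s' * I)) := by
        refine (norm_add_le _ _).trans_eq ?_
        simp [hv, dist_eq_norm]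
    _ ≤ ‖u - v‖ + |α - β| := by
        gcongr
        exact (dist_exp_ofReal_mul_I_le s s').trans (abs_sub_clamp_le (abs_le.2 hs) hβ)

theorem hausdorffDist_circleArc_le (hu : ‖u‖ = 1) (hv : ‖v‖ = 1) (hα : 0 ≤ α) (hβ : 0 ≤ β) :
    hausdorffDist (circleArc u α) (circleArc v β) ≤ ‖u - v‖ + |α - β| := by
  refine hausdorffDist_le_of_mem_dist (by positivity)
    (fun x hx => exists_mem_circleArc_dist_le hv hβ hx) fun x hx => ?_
  obtain ⟨y, hy, hxy⟩ := exists_mem_circleArc_dist_le hu hα hx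
  rw [norm_sub_rev, abs_sub_comm] at hxy
  exact ⟨y, hy, hxy⟩

theorem circleArc_injective (hu : ‖u‖ = 1) (hv : ‖v‖ = 1) (hα : 0 ≤ α) (hαπ : α < π)
    (hβ : 0 ≤ β) (h : circleArc u α = circleArc v β) : u = v ∧ α = β := by
  have hu0 : u ≠ 0 := by rintro rfl; simp at hu
  set θ := arg (v / u)
  have hvu : v = u * exp (θ * I) := by
    rw [exp_arg_mul_I_of_norm_eq_one (by simp [hu, hv]), mul_div_cancel₀ _ hu0]
  have hrot : (fun t : ℝ => exp (t * I)) '' Icc (-α) α =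
      (fun t : ℝ => exp (t * I)) '' Icc (θ - β) (θ + β) := by
    have := congrArg (image (u⁻¹ * ·)) h
    rwa [image_mul_circleArc, image_mul_circleArc, hvu, ← mul_assoc, inv_mul_cancel₀ hu0,
      one_mul, ← exp_zero, ← zero_mul I, ← ofReal_zero, circleArc_exp, circleArc_exp, zero_sub,
      zero_add] at this
  have hneg : (-1 : ℂ) ∉ (fun t : ℝ => exp (t * I)) '' Icc (θ - β) (θ + β) := by
    rw [← hrot]
    simpa [circleArc] using neg_notMem_circleArc (u := 1) norm_one hαπ
  have hlo : -π < θ - β := by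
    by_contra! hle
    exact hneg ⟨-π, ⟨hle, by linarith [neg_pi_lt_arg (v / u)]⟩, by simp [exp_neg]⟩
  have hhi : θ + β < π := by
    by_contra! hle
    exact hneg ⟨π, ⟨by linarith [arg_le_pi (v / u)], hle⟩, exp_pi_mul_I⟩
  have hIcc := congrArg (image arg) hrot
  rw [arg_image_exp_Icc (by linarith) hαπ.le, arg_image_exp_Icc hlo hhi.le,
    Icc_eq_Icc_iff (by linarith)] at hIcc
  have hθ : θ = 0 := by linarith [hIcc.1, hIcc.2]
  exact ⟨by rw [hvu, hθ]; simp, by linarith [hIcc.1, hIcc.2]⟩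

theorem exists_eq_circleArc_of_neg_one_notMem {A : Set ℂ} (hA : A ∈ subcontinua (sphere 0 1))
    (h : (-1 : ℂ) ∉ A) : ∃ θ α : ℝ, 0 ≤ α ∧ α < π ∧ A = circleArc (exp (θ * I)) α := by
  obtain ⟨hAS, hAc, hAconn⟩ := hA
  have hexp : ∀ x ∈ A, exp (arg x * I) = x := fun x hx =>
    exp_arg_mul_I_of_norm_eq_one (by simpa using hAS hx)
  have harg : ∀ x ∈ A, arg x ≠ π := fun x hx hπ => h <| by
    rwa [← exp_pi_mul_I, ← hπ, hexp x hx]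
  have hcont : ContinuousOn arg A := fun x hx => (continuousAt_arg <| mem_slitPlane_iff_arg.2
    ⟨harg x hx, by rintro rfl; simpa using hAS hx⟩).continuousWithinAt
  obtain ⟨a, b, hT⟩ : ∃ a b, arg '' A = Icc a b :=
    ⟨_, _, eq_Icc_of_connected_compact (hAconn.image _ hcont) (hAc.image_of_continuousOn hcont)⟩
  obtain ⟨x, hx⟩ := hAconn.nonempty
  have hab : a ≤ b := by
    have hx' : arg x ∈ Icc a b := hT ▸ mem_image_of_mem arg hx
    exact hx'.1.trans hx'.2
  obtain ⟨xa, hxa, rfl⟩ : a ∈ arg '' A := hT ▸ left_mem_Icc.2 hab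
  obtain ⟨xb, hxb, rfl⟩ : b ∈ arg '' A := hT ▸ right_mem_Icc.2 hab
  refine ⟨(arg xa + arg xb) / 2, (arg xb - arg xa) / 2, by linarith, ?_, ?_⟩
  · linarith [neg_pi_lt_arg xa, (arg_le_pi xb).lt_of_ne (harg xb hxb)]
  · rw [circleArc_exp, ← image_id' A, ← image_congr hexp,
      ← image_image (fun t : ℝ => exp (t * I)), hT]
    congr 2 <;> ring

theorem exists_eq_circleArc {A : Set ℂ} (hA : A ∈ subcontinua (sphere 0 1))
    (hne : A ≠ sphere 0 1) : ∃ u α, ‖u‖ = 1 ∧ 0 ≤ α ∧ α < π ∧ A = circleArc u α := by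
  obtain ⟨q, hq, hqA⟩ := not_subset.1 fun h => hne (hA.1.antisymm h)
  rw [mem_sphere_zero_iff_norm] at hq
  have hq0 : -q ≠ 0 := by rintro h; simp_all
  have hB : ((-q)⁻¹ * ·) '' A ∈ subcontinua (sphere 0 1) := by
    refine ⟨?_, hA.2.1.image (by fun_prop), hA.2.2.image _ (by fun_prop)⟩
    rintro _ ⟨x, hx, rfl⟩
    have hx1 : ‖x‖ = 1 := by simpa using hA.1 hx
    simp [hx1, hq]
  have hB1 : (-1 : ℂ) ∉ ((-q)⁻¹ * ·) '' A := by
    rintro ⟨x, hx, hx1⟩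
    rw [inv_mul_eq_iff_eq_mul₀ hq0, mul_neg_one, neg_neg] at hx1
    exact hqA (hx1 ▸ hx)
  obtain ⟨θ, α, hα, hαπ, hBarc⟩ := exists_eq_circleArc_of_neg_one_notMem hB hB1
  refine ⟨-q * exp (θ * I), α, by simp [hq], hα, hαπ, ?_⟩
  rw [← image_mul_circleArc, ← hBarc, image_image]
  simp only [mul_inv_cancel_left₀ hq0, image_id']

-- At `z = 0` the centre is `exp 0 = 1`, which is irrelevant since the half-width is `π`.
def diskArc (z : ℂ) : Set ℂ := circleArc (exp (arg z * I)) (π * (1 - ‖z‖))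

theorem diskArc_zero : diskArc 0 = sphere 0 1 := by
  simp [diskArc, circleArc_pi]

theorem diskArc_ofReal_mul (hu : ‖u‖ = 1) {r : ℝ} (hr : 0 < r) :
    diskArc (r * u) = circleArc u (π * (1 - r)) := by
  have hru : (r : ℂ) * u ≠ 0 := mul_ne_zero (by exact_mod_cast hr.ne') (by rintro rfl; simp at hu)
  have hnorm : ‖(r : ℂ) * u‖ = r := by simp [hu, hr.le]
  rw [diskArc, exp_arg_mul_I hru, hnorm, mul_div_cancel_left₀ _ (by exact_mod_cast hr.ne')]

theorem diskArc_mem_subcontinua (hz : ‖z‖ ≤ 1) : diskArc z ∈ subcontinua (sphere 0 1) :=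
  ⟨circleArc_subset_sphere (norm_exp_ofReal_mul_I _), isCompact_circleArc,
    isConnected_circleArc (mul_nonneg Real.pi_pos.le (sub_nonneg.2 hz))⟩

theorem diskArc_ne_sphere (hz0 : z ≠ 0) : diskArc z ≠ sphere 0 1 := fun h =>
  neg_notMem_circleArc (norm_exp_ofReal_mul_I _)
    (by have := norm_pos_iff.2 hz0; nlinarith [Real.pi_pos]) (h ▸ by simp : _ ∈ diskArc z)

theorem injOn_diskArc : InjOn diskArc (closedBall 0 1) := by
  intro z hz w hw h
  rw [mem_closedBall_zero_iff] at hz hw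
  rcases eq_or_ne z 0 with rfl | hz0 <;> rcases eq_or_ne w 0 with rfl | hw0
  · rfl
  · exact absurd (h.symm.trans diskArc_zero) (diskArc_ne_sphere hw0)
  · exact absurd (h.trans diskArc_zero) (diskArc_ne_sphere hz0)
  · have hzpos := norm_pos_iff.2 hz0
    have hwpos := norm_pos_iff.2 hw0
    obtain ⟨harg, hnorm⟩ := circleArc_injective (norm_exp_ofReal_mul_I _)
      (norm_exp_ofReal_mul_I _) (by nlinarith [Real.pi_pos]) (by nlinarith [Real.pi_pos])
      (by nlinarith [Real.pi_pos]) h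
    have : ‖z‖ = ‖w‖ := by nlinarith [Real.pi_pos]
    rw [← norm_mul_exp_arg_mul_I z, ← norm_mul_exp_arg_mul_I w, harg, this]

theorem surjOn_diskArc : SurjOn diskArc (closedBall 0 1) (subcontinua (sphere 0 1)) := by
  intro A hA
  by_cases hAS : A = sphere 0 1
  · exact ⟨0, by simp, hAS ▸ diskArc_zero⟩
  obtain ⟨u, α, hu, hα, hαπ, rfl⟩ := exists_eq_circleArc hA hAS
  have hr : 0 < 1 - α / π := by rw [sub_pos, div_lt_one Real.pi_pos]; exact hαπ
  refine ⟨(1 - α / π : ℝ) * u, ?_, ?_⟩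
  · rw [mem_closedBall_zero_iff, norm_mul, hu, mul_one, Complex.norm_real,
      Real.norm_of_nonneg hr.le]
    linarith [div_nonneg hα Real.pi_pos.le]
  · rw [diskArc_ofReal_mul hu hr]
    congr 1
    field_simp
    ring

theorem bijOn_diskArc : BijOn diskArc (closedBall 0 1) (subcontinua (sphere 0 1)) :=
  ⟨fun _ hz => diskArc_mem_subcontinua (mem_closedBall_zero_iff.1 hz), injOn_diskArc,
    surjOn_diskArc⟩

theorem hausdorffDist_diskArc_le (hz : ‖z‖ ≤ 1) (hw : ‖w‖ ≤ 1) :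
    hausdorffDist (diskArc z) (diskArc w) ≤
      ‖exp (arg z * I) - exp (arg w * I)‖ + π * |‖z‖ - ‖w‖| := by
  refine (hausdorffDist_circleArc_le (norm_exp_ofReal_mul_I _) (norm_exp_ofReal_mul_I _)
    (mul_nonneg Real.pi_pos.le (sub_nonneg.2 hz))
    (mul_nonneg Real.pi_pos.le (sub_nonneg.2 hw))).trans_eq ?_
  rw [← mul_sub, abs_mul, abs_of_pos Real.pi_pos, sub_sub_sub_cancel_left, abs_sub_comm]

theorem hausdorffDist_diskArc_zero_le (hz : ‖z‖ ≤ 1) :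
    hausdorffDist (diskArc z) (diskArc 0) ≤ π * ‖z‖ := by
  rw [diskArc_zero, ← circleArc_pi (norm_exp_ofReal_mul_I (arg z))]
  refine (hausdorffDist_circleArc_le (norm_exp_ofReal_mul_I _) (norm_exp_ofReal_mul_I _)
    (mul_nonneg Real.pi_pos.le (sub_nonneg.2 hz)) Real.pi_pos.le).trans_eq ?_
  rw [sub_self, norm_zero, zero_add, mul_one_sub, sub_sub_cancel_left, abs_neg,
    abs_of_nonneg (by positivity)]

theorem continuousAt_exp_arg_mul_I (hz : z ≠ 0) : ContinuousAt (fun w => exp (arg w * I)) z := by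
  have : ContinuousAt (fun w : ℂ => w / ‖w‖) z :=
    continuousAt_id.div (by fun_prop) (by simpa using hz)
  exact this.congr ((eventually_ne_nhds hz).mono fun w hw => (exp_arg_mul_I hw).symm)

theorem tendsto_hausdorffDist_diskArc (hz : z ∈ closedBall 0 1) :
    Tendsto (fun w => hausdorffDist (diskArc w) (diskArc z)) (𝓝[closedBall 0 1] z) (𝓝 0) := by
  rw [mem_closedBall_zero_iff] at hz
  have hball : ∀ᶠ w in 𝓝[closedBall 0 1] z, ‖w‖ ≤ 1 :=
    eventually_mem_nhdsWithin.mono fun w hw => mem_closedBall_zero_iff.1 hw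
  rcases eq_or_ne z 0 with rfl | hz0
  · refine squeeze_zero' (.of_forall fun _ => hausdorffDist_nonneg)
      (hball.mono fun w hw => hausdorffDist_diskArc_zero_le hw) ?_
    have : Tendsto (fun w : ℂ => π * ‖w‖) (𝓝 0) (𝓝 (π * ‖(0 : ℂ)‖)) :=
      (continuous_const.mul continuous_norm).tendsto 0
    simpa using this.mono_left nhdsWithin_le_nhds
  · refine squeeze_zero' (.of_forall fun _ => hausdorffDist_nonneg)
      (hball.mono fun w hw => hausdorffDist_diskArc_le hw hz) ?_
    have : Tendsto (fun w => ‖exp (arg w * I) - exp (arg z * I)‖ + π * |‖w‖ - ‖z‖|) (𝓝 z)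
        (𝓝 (‖exp (arg z * I) - exp (arg z * I)‖ + π * |‖z‖ - ‖z‖|)) :=
      (((continuousAt_exp_arg_mul_I hz0).sub continuousAt_const).norm.add
        (continuousAt_const.mul (continuous_norm.continuousAt.sub continuousAt_const).abs)).tendsto
    simpa using this.mono_left nhdsWithin_le_nhds

end ComplexCircle

/-- The hyperspace `C(S¹)` of subcontinua of the unit circle, with the Hausdorff metric,
is homeomorphic to the closed unit disk in the plane. -/
theorem hyperspace_circle_homeo_disk :
    Nonempty (HyperspaceCircle ≃ₜ
      (Metric.closedBall (0 : EuclideanSpace ℝ (Fin 2)) 1)) := by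
  let e := Complex.orthonormalBasisOneI.repr
  have hball : BijOn e.symm (closedBall 0 1) (closedBall 0 1) := by
    simpa using e.symm.injective.bijOn_image (s := closedBall 0 1)
  have hcircle : BijOn (Set.image e) (subcontinua (sphere 0 1)) (subcontinua UnitCircle) := by
    simpa using e.toHomeomorph.bijOn_image_subcontinua (sphere 0 1)
  refine nonempty_homeomorph_of_bijOn_subcontinua (isCompact_closedBall 0 1)
    (hcircle.comp (bijOn_diskArc.comp hball)) fun p hp => ?_
  simp only [comp_apply, hausdorffDist_image e.isometry]
  exact (tendsto_hausdorffDist_diskArc (hball.mapsTo hp)).comp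
    (e.symm.continuous.continuousWithinAt.tendsto_nhdsWithin hball.mapsTo)
end

section
/- For every continuum X there exists a Whitney map μ : 2^X → [0,∞), i.e., a continuous function satisfying: μ({x}) = 0 for all x ∈ X; μ(A) < μ(B) whenever A ⊊ B; and μ(A∪B) ≤ μ(A) + μ(B) − μ(A∩B) whenever A ∩ B ≠ ∅. One such map is μ(A) = Σ_{n≥1} 2^{−n} diam(f_n(A)), where f_n(x) = 1/(1 + d(x_n, x)) for a countable dense set {x_n} in X. -/
/-!
Each coordinate `f_n x = 1 / (1 + d(x_n, x))` is 1-Lipschitz with values in `[0, 1]`, so the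
series of weighted diameters `diam (f_n '' A)` converges and moves by at most twice the Hausdorff
distance when `A` moves. For bounded sets of reals `diam = sSup - sInf`, which is monotone and
submodular on overlapping sets, and these properties pass to the series. For strictness, a point
`x ∈ B \ A` lies at distance `r > 0` from `A`; a dense point `x_n` within `r / 3` of `x` gives a
coordinate with `f_n x > sSup (f_n '' A)`, so `diam (f_n '' A) < diam (f_n '' B)`.
-/

open Metric Set

section Hausdorff

variable {α β : Type*} [PseudoMetricSpace α] [PseudoMetricSpace β] {s t : Set α}

namespace Metric

theorem diam_le_diam_add_two_mul_hausdorffDist (ht : Bornology.IsBounded t)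
    (fin : hausdorffEDist s t ≠ ⊤) : diam s ≤ diam t + 2 * hausdorffDist s t := by
  have hH := hausdorffDist_nonneg (s := s) (t := t)
  refine diam_le_of_forall_dist_le (by linarith [diam_nonneg (s := t)]) fun x hx y hy => ?_
  refine le_of_forall_pos_lt_add fun ε hε => ?_
  have hlt : hausdorffDist s t < hausdorffDist s t + ε / 2 := by linarith
  obtain ⟨x', hx', hxx'⟩ := exists_dist_lt_of_hausdorffDist_lt hx hlt fin
  obtain ⟨y', hy', hyy'⟩ := exists_dist_lt_of_hausdorffDist_lt hy hlt fin
  calc dist x y ≤ dist x x' + dist x' y' + dist y' y := dist_triangle4 _ _ _ _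
    _ < diam t + 2 * hausdorffDist s t + ε := by
      linarith [dist_le_diam_of_mem ht hx' hy', dist_comm y y']

theorem hausdorffEDist_image_le_of_lipschitzWith_one {f : α → β} (hf : LipschitzWith 1 f) :
    hausdorffEDist (f '' s) (f '' t) ≤ hausdorffEDist s t := by
  have key : ∀ {u v : Set α}, ∀ x ∈ u, infEDist (f x) (f '' v) ≤ hausdorffEDist u v :=
    fun {u v} x hx => le_trans (le_iInf₂ fun y hy =>
      (infEDist_le_edist_of_mem (mem_image_of_mem f hy)).trans
        (by simpa using hf.edist_le_mul x y))
      (infEDist_le_hausdorffEDist_of_mem hx)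
  refine hausdorffEDist_le_of_infEDist ?_ ?_
  · rintro _ ⟨x, hx, rfl⟩
    exact key x hx
  · rintro _ ⟨x, hx, rfl⟩
    rw [hausdorffEDist_comm]
    exact key x hx

end Metric

theorem LipschitzWith.abs_diam_image_sub_le {f : α → β} (hf : LipschitzWith 1 f) {A B : Set α}
    (hA : Bornology.IsBounded (f '' A)) (hB : Bornology.IsBounded (f '' B))
    (fin : hausdorffEDist A B ≠ ⊤) :
    |diam (f '' A) - diam (f '' B)| ≤ 2 * hausdorffDist A B := by
  have hle := hausdorffEDist_image_le_of_lipschitzWith_one hf (s := A) (t := B)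
  have fin' : hausdorffEDist (f '' A) (f '' B) ≠ ⊤ := ne_top_of_le_ne_top fin hle
  have hdist : hausdorffDist (f '' A) (f '' B) ≤ hausdorffDist A B :=
    ENNReal.toReal_mono fin hle
  rw [abs_sub_le_iff]
  constructor
  · linarith [diam_le_diam_add_two_mul_hausdorffDist hB fin']
  · rw [hausdorffEDist_comm] at fin'
    linarith [diam_le_diam_add_two_mul_hausdorffDist hA fin',
      hausdorffDist_comm (s := f '' A) (t := f '' B)]

end Hausdorff

namespace Real

variable {s t : Set ℝ}

theorem diam_lt_diam_of_subset {b y : ℝ} (hst : s ⊆ t) (ht : Bornology.IsBounded t)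
    (hs : s.Nonempty) (hsb : ∀ a ∈ s, a ≤ b) (hy : y ∈ t) (hby : b < y) :
    diam s < diam t := by
  rw [Real.diam_eq (ht.subset hst), Real.diam_eq ht]
  linarith [csSup_le hs hsb, le_csSup ht.bddAbove hy, csInf_le_csInf ht.bddBelow hs hst]

theorem diam_union_add_diam_inter_le (hs : Bornology.IsBounded s) (ht : Bornology.IsBounded t)
    (hst : (s ∩ t).Nonempty) : diam (s ∪ t) + diam (s ∩ t) ≤ diam s + diam t := by
  have hs₀ : s.Nonempty := hst.mono inter_subset_left
  have ht₀ : t.Nonempty := hst.mono inter_subset_right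
  rw [Real.diam_eq (hs.union ht), Real.diam_eq hs, Real.diam_eq ht,
    Real.diam_eq (hs.subset inter_subset_left), csSup_union hs.bddAbove hs₀ ht.bddAbove ht₀,
    csInf_union hs.bddBelow hs₀ ht.bddBelow ht₀]
  have hsup : sSup (s ∩ t) ≤ sSup s ⊓ sSup t :=
    le_inf (csSup_le_csSup hs.bddAbove hst inter_subset_left)
      (csSup_le_csSup ht.bddAbove hst inter_subset_right)
  have hinf : sInf s ⊔ sInf t ≤ sInf (s ∩ t) :=
    sup_le (csInf_le_csInf hs.bddBelow hst inter_subset_left)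
      (csInf_le_csInf ht.bddBelow hst inter_subset_right)
  have hsup' : sSup s ⊔ sSup t + sSup s ⊓ sSup t = sSup s + sSup t := max_add_min _ _
  have hinf' : sInf s ⊔ sInf t + sInf s ⊓ sInf t = sInf s + sInf t := max_add_min _ _
  linarith

end Real

theorem hasSum_one_half_pow_succ : HasSum (fun n : ℕ => (1 / 2 : ℝ) ^ (n + 1)) 1 := by
  simpa [pow_succ] using hasSum_geometric_two.mul_right (1 / 2 : ℝ)

section HalfWeightedSum

variable {g : ℕ → ℝ} {C : ℝ}

theorem norm_one_half_pow_succ_mul_le (hg : ∀ n, |g n| ≤ C) (n : ℕ) :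
    ‖(1 / 2 : ℝ) ^ (n + 1) * g n‖ ≤ (1 / 2 : ℝ) ^ (n + 1) * C := by
  rw [norm_mul, Real.norm_eq_abs, Real.norm_eq_abs, abs_of_pos (by positivity)]
  exact mul_le_mul_of_nonneg_left (hg n) (by positivity)

theorem summable_one_half_pow_succ_mul (hg : ∀ n, |g n| ≤ C) :
    Summable fun n => (1 / 2 : ℝ) ^ (n + 1) * g n :=
  .of_norm_bounded (hasSum_one_half_pow_succ.summable.mul_right C)
    (norm_one_half_pow_succ_mul_le hg)

theorem abs_tsum_one_half_pow_succ_mul_le (hg : ∀ n, |g n| ≤ C) :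
    |∑' n, (1 / 2 : ℝ) ^ (n + 1) * g n| ≤ C := by
  have hC := hasSum_one_half_pow_succ.mul_right C
  rw [one_mul] at hC
  exact tsum_of_norm_bounded hC (norm_one_half_pow_succ_mul_le hg)

end HalfWeightedSum

section InvOneAddDist

variable {X : Type*} [PseudoMetricSpace X]

theorem abs_one_div_one_add_sub_le {a b : ℝ} (ha : 0 ≤ a) (hb : 0 ≤ b) :
    |1 / (1 + a) - 1 / (1 + b)| ≤ |a - b| := by
  have hab : 1 / (1 + a) - 1 / (1 + b) = (b - a) / ((1 + a) * (1 + b)) := by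
    field_simp
    ring
  rw [hab, abs_div, abs_of_pos (by positivity : (0 : ℝ) < (1 + a) * (1 + b)), abs_sub_comm b a]
  exact div_le_self (abs_nonneg _) (by nlinarith)

theorem lipschitzWith_one_div_one_add_dist (c : X) :
    LipschitzWith 1 fun x => 1 / (1 + dist c x) :=
  LipschitzWith.of_dist_le_mul fun x y => by
    simpa only [Real.dist_eq] using (abs_one_div_one_add_sub_le dist_nonneg dist_nonneg).trans
      ((LipschitzWith.dist_right c).dist_le_mul x y)

theorem one_div_one_add_dist_mem_Icc (c x : X) : 1 / (1 + dist c x) ∈ Icc (0 : ℝ) 1 :=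
  ⟨by positivity, div_le_one_of_le₀ (le_add_of_nonneg_right dist_nonneg) (by positivity)⟩

theorem DenseRange.exists_one_div_one_add_dist_gap {xs : ℕ → X} (hdense : DenseRange xs)
    {A : Set X} (hA : IsClosed A) (hAne : A.Nonempty) {x : X} (hx : x ∉ A) :
    ∃ n b, (∀ a ∈ A, 1 / (1 + dist (xs n) a) ≤ b) ∧ b < 1 / (1 + dist (xs n) x) := by
  have hr : 0 < infDist x A := (hA.notMem_iff_infDist_pos hAne).1 hx
  obtain ⟨n, hn⟩ := hdense.exists_dist_lt x (by positivity : 0 < infDist x A / 3)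
  refine ⟨n, 1 / (1 + 2 * infDist x A / 3), fun a ha => ?_, ?_⟩
  · gcongr
    linarith [infDist_le_dist_of_mem (x := x) ha, dist_triangle x (xs n) a]
  · gcongr
    linarith [dist_comm x (xs n)]

end InvOneAddDist

section DiamSeries

variable {X : Type*}

theorem isBounded_image_of_mem_Icc {g : X → ℝ} (hg : ∀ x, g x ∈ Icc (0 : ℝ) 1)
    (A : Set X) :
    Bornology.IsBounded (g '' A) :=
  isBounded_Icc (0 : ℝ) 1 |>.subset <| image_subset_iff.2 fun x _ => hg x

theorem abs_diam_image_le_one {g : X → ℝ} (hg : ∀ x, g x ∈ Icc (0 : ℝ) 1) (A : Set X) :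
    |diam (g '' A)| ≤ 1 := by
  rw [abs_of_nonneg diam_nonneg]
  calc diam (g '' A) ≤ diam (Icc (0 : ℝ) 1) :=
        diam_mono (image_subset_iff.2 fun x _ => hg x) (isBounded_Icc 0 1)
    _ = 1 := by simp [Real.diam_Icc]

noncomputable def diamSeries (f : ℕ → X → ℝ) (A : Set X) : ℝ :=
  ∑' n, (1 / 2 : ℝ) ^ (n + 1) * diam (f n '' A)

theorem diamSeries_singleton (f : ℕ → X → ℝ) (x : X) : diamSeries f {x} = 0 := by
  simp [diamSeries]

variable {f : ℕ → X → ℝ}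

theorem summable_diamSeries (hf : ∀ n x, f n x ∈ Icc (0 : ℝ) 1) (A : Set X) :
    Summable fun n => (1 / 2 : ℝ) ^ (n + 1) * diam (f n '' A) :=
  summable_one_half_pow_succ_mul fun n => abs_diam_image_le_one (hf n) A

theorem abs_diamSeries_sub_le [PseudoMetricSpace X] (hf : ∀ n x, f n x ∈ Icc (0 : ℝ) 1)
    (hlip : ∀ n, LipschitzWith 1 (f n)) {A B : Set X}
    (fin : hausdorffEDist A B ≠ ⊤) :
    |diamSeries f A - diamSeries f B| ≤ 2 * hausdorffDist A B := by
  rw [diamSeries, diamSeries, ← (summable_diamSeries hf A).tsum_sub (summable_diamSeries hf B)]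
  simp only [← mul_sub]
  exact abs_tsum_one_half_pow_succ_mul_le fun n => (hlip n).abs_diam_image_sub_le
    (isBounded_image_of_mem_Icc (hf n) A) (isBounded_image_of_mem_Icc (hf n) B) fin

theorem diamSeries_lt_of_ssubset (hf : ∀ n x, f n x ∈ Icc (0 : ℝ) 1) {A B : Set X}
    (hA : A.Nonempty) (hAB : A ⊂ B)
    (hsep : ∀ x ∉ A, ∃ n b, (∀ a ∈ A, f n a ≤ b) ∧ b < f n x) :
    diamSeries f A < diamSeries f B := by
  obtain ⟨x, hxB, hxA⟩ := exists_of_ssubset hAB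
  obtain ⟨n, b, hAb, hbx⟩ := hsep x hxA
  have hmono : ∀ m, diam (f m '' A) ≤ diam (f m '' B) := fun m =>
    diam_mono (image_mono hAB.subset) (isBounded_image_of_mem_Icc (hf m) B)
  have hlt : diam (f n '' A) < diam (f n '' B) :=
    Real.diam_lt_diam_of_subset (image_mono hAB.subset) (isBounded_image_of_mem_Icc (hf n) B)
      (hA.image _) (forall_mem_image.2 hAb) (mem_image_of_mem _ hxB) hbx
  exact Summable.tsum_lt_tsum_of_nonneg (fun m => by positivity)
    (fun m => mul_le_mul_of_nonneg_left (hmono m) (by positivity))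
    (mul_lt_mul_of_pos_left hlt (by positivity)) (summable_diamSeries hf B)

theorem diamSeries_union_add_inter_le (hf : ∀ n x, f n x ∈ Icc (0 : ℝ) 1) {A B : Set X}
    (hAB : (A ∩ B).Nonempty) :
    diamSeries f (A ∪ B) + diamSeries f (A ∩ B) ≤ diamSeries f A + diamSeries f B := by
  have hn : ∀ n, diam (f n '' (A ∪ B)) + diam (f n '' (A ∩ B)) ≤
      diam (f n '' A) + diam (f n '' B) := fun n => by
    have hbdd := isBounded_image_of_mem_Icc (hf n)
    have hinter : diam (f n '' (A ∩ B)) ≤ diam (f n '' A ∩ f n '' B) :=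
      diam_mono (image_inter_subset _ _ _) ((hbdd A).subset inter_subset_left)
    rw [image_union]
    linarith [Real.diam_union_add_diam_inter_le (hbdd A) (hbdd B)
      ((hAB.image (f n)).mono (image_inter_subset _ _ _))]
  have hs := summable_diamSeries hf
  refine hasSum_le (fun n => ?_) ((hs _).hasSum.add (hs _).hasSum)
    ((hs _).hasSum.add (hs _).hasSum)
  rw [← mul_add, ← mul_add]
  exact mul_le_mul_of_nonneg_left (hn n) (by positivity)

end DiamSeries

theorem exists_whitney_map_general
    {X : Type*} [MetricSpace X] [CompactSpace X]
    (xs : ℕ → X) (hdense : DenseRange xs) :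
    ∃ μ : Set X → ℝ,
      (∀ A : Set X, μ A =
        ∑' n : ℕ, (1 / 2 : ℝ) ^ (n + 1) *
          Metric.diam ((fun x => 1 / (1 + dist (xs n) x)) '' A)) ∧
      -- continuity with respect to the Hausdorff metric
      (∀ A : Set X, A.Nonempty → IsClosed A → ∀ ε > 0, ∃ δ > 0,
        ∀ B : Set X, B.Nonempty → IsClosed B → hausdorffDist A B < δ →
          |μ A - μ B| < ε) ∧
      -- (a) zero on singletons
      (∀ x : X, μ {x} = 0) ∧
      -- (b) strict monotonicity
      (∀ A B : Set X, A.Nonempty → IsClosed A → B.Nonempty → IsClosed B →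
        A ⊂ B → μ A < μ B) ∧
      -- (c) submodularity
      (∀ A B : Set X, A.Nonempty → IsClosed A → B.Nonempty → IsClosed B →
        (A ∩ B).Nonempty → μ (A ∪ B) ≤ μ A + μ B - μ (A ∩ B)) := by
  set f : ℕ → X → ℝ := fun n x => 1 / (1 + dist (xs n) x)
  have hf : ∀ n x, f n x ∈ Icc (0 : ℝ) 1 := fun n => one_div_one_add_dist_mem_Icc (xs n)
  refine ⟨diamSeries f, fun A => rfl, ?_, diamSeries_singleton f, ?_, ?_⟩
  · intro A hA _ ε hε
    refine ⟨ε / 2, half_pos hε, fun B hB _ hAB => ?_⟩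
    have fin := hausdorffEDist_ne_top_of_nonempty_of_bounded hA hB
      isBounded_of_compactSpace isBounded_of_compactSpace
    linarith [abs_diamSeries_sub_le hf (fun n => lipschitzWith_one_div_one_add_dist (xs n)) fin]
  · intro A B hA hAc _ _ hAB
    exact diamSeries_lt_of_ssubset hf hA hAB fun x hx =>
      hdense.exists_one_div_one_add_dist_gap hAc hA hx
  · intro A B _ _ _ _ hAB
    linarith [diamSeries_union_add_inter_le hf hAB]

/-- For every continuum `X`, the map `μ(A) = Σ_{n≥1} 2^{-n} diam (f_n '' A)`, where
`f_n(x) = 1/(1 + d(x_n, x))` for a countable dense set `{x_n}`, is a Whitney map: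
continuous with respect to the Hausdorff metric, zero on singletons, strictly monotone
under proper inclusion, and submodular.  In particular a Whitney map exists. -/
theorem exists_whitney_map
    {X : Type*} [MetricSpace X] [CompactSpace X] [ConnectedSpace X] [Nonempty X]
    (xs : ℕ → X) (hdense : DenseRange xs) :
    ∃ μ : Set X → ℝ,
      (∀ A : Set X, μ A =
        ∑' n : ℕ, (1 / 2 : ℝ) ^ (n + 1) *
          Metric.diam ((fun x => 1 / (1 + dist (xs n) x)) '' A)) ∧
      -- continuity with respect to the Hausdorff metric
      (∀ A : Set X, A.Nonempty → IsClosed A → ∀ ε > 0, ∃ δ > 0,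
        ∀ B : Set X, B.Nonempty → IsClosed B → hausdorffDist A B < δ →
          |μ A - μ B| < ε) ∧
      -- (a) zero on singletons
      (∀ x : X, μ {x} = 0) ∧
      -- (b) strict monotonicity
      (∀ A B : Set X, A.Nonempty → IsClosed A → B.Nonempty → IsClosed B →
        A ⊂ B → μ A < μ B) ∧
      -- (c) submodularity
      (∀ A B : Set X, A.Nonempty → IsClosed A → B.Nonempty → IsClosed B →
        (A ∩ B).Nonempty → μ (A ∪ B) ≤ μ A + μ B - μ (A ∩ B)) :=
  exists_whitney_map_general xs hdense
end

section
/- The function μ(A) = Σ_{n≥1} 2^{−n} diam(f_n(A)), with f_n(x) = 1/(1 + d(x_n,x)) for a dense sequence (x_n) in a continuum X, is strictly monotone on 2^X: if A ⊊ B are nonempty closed subsets of X, then μ(A) < μ(B). -/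
/-!
Pick `b ∈ B \ A`. Since `A` is closed, some ball `ball b ε` misses `A`, and density gives an `xₙ`
with `d(xₙ, b) < ε / 2 ≤ d(xₙ, a)` for all `a ∈ A`. As `fₙ` is a decreasing function of `d(xₙ, ·)`,
`fₙ b` lies strictly above `sup fₙ(A)`, so `diam fₙ(B) ≥ fₙ b - inf fₙ(A) > diam fₙ(A)`.
All other terms of the series can only grow from `A` to `B`, and the weights are positive.
-/

open Metric Set

theorem Real.diam_lt_diam_of_sSup_lt {S T : Set ℝ} (hS : S.Nonempty) (hST : S ⊆ T)
    (hT : Bornology.IsBounded T) {t : ℝ} (ht : t ∈ T) (hlt : sSup S < t) :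
    diam S < diam T := by
  have hSb : Bornology.IsBounded S := hT.subset hST
  have hInf : sInf T ≤ sInf S := csInf_le_csInf hT.bddBelow hS hST
  have hSup : t ≤ sSup T := le_csSup hT.bddAbove ht
  rw [Real.diam_eq hSb, Real.diam_eq hT]
  linarith

theorem DenseRange.exists_dist_lt_of_notMem {X ι : Type*} [PseudoMetricSpace X] {xs : ι → X}
    (hdense : DenseRange xs) {A : Set X} (hA : IsClosed A) {b : X} (hb : b ∉ A) :
    ∃ i r, dist (xs i) b < r ∧ ∀ a ∈ A, r ≤ dist (xs i) a := by
  obtain ⟨ε, hε, hball⟩ := Metric.isOpen_iff.mp hA.isOpen_compl b hb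
  obtain ⟨i, hi⟩ := Metric.denseRange_iff.mp hdense b (ε / 2) (half_pos hε)
  refine ⟨i, ε / 2, by rwa [dist_comm], fun a ha => ?_⟩
  have hεa : ε ≤ dist b a := by
    by_contra! h
    exact hball (mem_ball'.mpr h) ha
  linarith [dist_triangle b (xs i) a]

section WhitneyMap

variable {X : Type*} [PseudoMetricSpace X]

/-- The paper's `fₙ` is `whitneyMap (xs n)`. -/
noncomputable def whitneyMap (p x : X) : ℝ := 1 / (1 + dist p x)

theorem whitneyMap_mem_Icc (p x : X) : whitneyMap p x ∈ Icc (0 : ℝ) 1 := by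
  have hpos : (0 : ℝ) < 1 + dist p x := by positivity
  refine ⟨by unfold whitneyMap; positivity, ?_⟩
  rw [whitneyMap, div_le_one hpos]
  linarith [dist_nonneg (x := p) (y := x)]

theorem isBounded_image_whitneyMap (p : X) (S : Set X) :
    Bornology.IsBounded (whitneyMap p '' S) :=
  (isBounded_Icc (0 : ℝ) 1).subset (image_subset_iff.mpr fun x _ => whitneyMap_mem_Icc p x)

theorem diam_image_whitneyMap_le_one (p : X) (S : Set X) : diam (whitneyMap p '' S) ≤ 1 := by
  calc diam (whitneyMap p '' S) ≤ diam (Icc (0 : ℝ) 1) :=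
        diam_mono (image_subset_iff.mpr fun x _ => whitneyMap_mem_Icc p x) (isBounded_Icc 0 1)
    _ = 1 := by rw [Real.diam_Icc zero_le_one, sub_zero]

theorem diam_image_whitneyMap_lt {p : X} {A B : Set X} (hA : A.Nonempty) (hAB : A ⊆ B) {b : X}
    (hb : b ∈ B) {r : ℝ} (hpb : dist p b < r) (hpA : ∀ a ∈ A, r ≤ dist p a) :
    diam (whitneyMap p '' A) < diam (whitneyMap p '' B) := by
  have hsup : sSup (whitneyMap p '' A) ≤ 1 / (1 + r) :=
    csSup_le (hA.image _) <| forall_mem_image.mpr fun a ha =>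
      one_div_le_one_div_of_le (by linarith [dist_nonneg (x := p) (y := b)]) (by linarith [hpA a ha])
  have hb_gt : 1 / (1 + r) < whitneyMap p b :=
    one_div_lt_one_div_of_lt (by positivity) (by linarith)
  exact Real.diam_lt_diam_of_sSup_lt (hA.image _) (image_mono hAB)
    (isBounded_image_whitneyMap p B) (mem_image_of_mem _ hb) (hsup.trans_lt hb_gt)

end WhitneyMap

theorem summable_half_pow_succ_mul {a : ℕ → ℝ} (h0 : ∀ n, 0 ≤ a n) (h1 : ∀ n, a n ≤ 1) :
    Summable fun n => (1 / 2 : ℝ) ^ (n + 1) * a n := by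
  refine Summable.of_nonneg_of_le (fun n => by have := h0 n; positivity)
    (fun n => mul_le_of_le_one_right (by positivity) (h1 n)) ?_
  simp_rw [pow_succ]
  exact summable_geometric_two.mul_right _

theorem whitney_formula_strict_mono_general
    {X : Type*} [MetricSpace X]
    (xs : ℕ → X) (hdense : DenseRange xs)
    (μ : Set X → ℝ)
    (hμ : ∀ A : Set X, μ A =
      ∑' n : ℕ, (1 / 2 : ℝ) ^ (n + 1) *
        Metric.diam ((fun x => 1 / (1 + dist (xs n) x)) '' A))
    (A B : Set X) (hA : A.Nonempty) (hAc : IsClosed A)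
    (hAB : A ⊂ B) :
    μ A < μ B := by
  obtain ⟨b, hbB, hbA⟩ := not_subset.mp hAB.2
  obtain ⟨n, r, hnb, hnA⟩ := hdense.exists_dist_lt_of_notMem hAc hbA
  rw [hμ A, hμ B]
  change ∑' m, (1 / 2 : ℝ) ^ (m + 1) * diam (whitneyMap (xs m) '' A)
    < ∑' m, (1 / 2 : ℝ) ^ (m + 1) * diam (whitneyMap (xs m) '' B)
  refine Summable.tsum_lt_tsum_of_nonneg (i := n) (fun m => by positivity)
    (fun m => mul_le_mul_of_nonneg_left
      (diam_mono (image_mono hAB.1) (isBounded_image_whitneyMap (xs m) B)) (by positivity))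
    (mul_lt_mul_of_pos_left (diam_image_whitneyMap_lt hA hAB.1 hbB hnb hnA) (by positivity))
    (summable_half_pow_succ_mul (fun m => diam_nonneg)
      (fun m => diam_image_whitneyMap_le_one (xs m) B))

/-- The function `μ(A) = Σ_{n≥1} 2^{-n} diam (f_n '' A)`, with
`f_n(x) = 1/(1 + d(x_n, x))` for a dense sequence `(x_n)` in a continuum `X`, is
strictly monotone: if `A ⊊ B` are nonempty closed subsets of `X`, then `μ A < μ B`. -/
theorem whitney_formula_strict_mono
    {X : Type*} [MetricSpace X] [CompactSpace X] [ConnectedSpace X] [Nonempty X]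
    (xs : ℕ → X) (hdense : DenseRange xs)
    (μ : Set X → ℝ)
    (hμ : ∀ A : Set X, μ A =
      ∑' n : ℕ, (1 / 2 : ℝ) ^ (n + 1) *
        Metric.diam ((fun x => 1 / (1 + dist (xs n) x)) '' A))
    (A B : Set X) (hA : A.Nonempty) (hAc : IsClosed A)
    (hB : B.Nonempty) (hBc : IsClosed B) (hAB : A ⊂ B) :
    μ A < μ B :=
  whitney_formula_strict_mono_general xs hdense μ hμ A B hA hAc hAB
end

section
/- Let μ : 2^X → [0,∞) be a Whitney map (satisfying conditions (a), (b), (c)). Then d_μ(A,B) = max{ μ(A∪B) − μ(A), μ(A∪B) − μ(B) } defines a metric on 2^X. -/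
/-- If `μ` is a Whitney map on the nonempty closed subsets of a continuum `X`, then
`d_μ(A,B) = max (μ(A∪B) - μ A) (μ(A∪B) - μ B)` is a metric on `2^X`. -/
theorem whitney_distance_is_metric
    {X : Type*} [MetricSpace X] [CompactSpace X] [ConnectedSpace X] [Nonempty X]
    (μ : Set X → ℝ)
    (ha : ∀ x : X, μ {x} = 0)
    (hb : ∀ A B : Set X, A.Nonempty → IsClosed A → B.Nonempty → IsClosed B →
      A ⊂ B → μ A < μ B)
    (hc : ∀ A B : Set X, A.Nonempty → IsClosed A → B.Nonempty → IsClosed B →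
      (A ∩ B).Nonempty → μ (A ∪ B) ≤ μ A + μ B - μ (A ∩ B))
    (dμ : Set X → Set X → ℝ)
    (hd : ∀ A B : Set X, dμ A B = max (μ (A ∪ B) - μ A) (μ (A ∪ B) - μ B)) :
    (∀ A B : Set X, A.Nonempty → IsClosed A → B.Nonempty → IsClosed B →
        0 ≤ dμ A B) ∧
    (∀ A B : Set X, A.Nonempty → IsClosed A → B.Nonempty → IsClosed B →
        (dμ A B = 0 ↔ A = B)) ∧
    (∀ A B : Set X, A.Nonempty → IsClosed A → B.Nonempty → IsClosed B →
        dμ A B = dμ B A) ∧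
    (∀ A B C : Set X, A.Nonempty → IsClosed A → B.Nonempty → IsClosed B →
        C.Nonempty → IsClosed C → dμ A C ≤ dμ A B + dμ B C) := by
  -- monotonicity (non-strict)
  have mono : ∀ A B : Set X, A.Nonempty → IsClosed A → B.Nonempty → IsClosed B →
      A ⊆ B → μ A ≤ μ B := by
    intro A B hA hAc hB hBc hsub
    rcases hsub.ssubset_or_eq with h | h
    · exact (hb A B hA hAc hB hBc h).le
    · exact h ▸ le_refl _
  have nonneg : ∀ A B : Set X, A.Nonempty → IsClosed A → B.Nonempty → IsClosed B →
      0 ≤ dμ A B := by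
    intro A B hA hAc hB hBc
    rw [hd]
    have : μ A ≤ μ (A ∪ B) :=
      mono A (A ∪ B) hA hAc (hA.mono Set.subset_union_left) (hAc.union hBc)
        Set.subset_union_left
    exact le_max_of_le_left (by linarith)
  refine ⟨nonneg, ?_, ?_, ?_⟩
  · intro A B hA hAc hB hBc
    constructor
    · intro h0
      rw [hd] at h0
      have hUc : IsClosed (A ∪ B) := hAc.union hBc
      have hUn : (A ∪ B).Nonempty := hA.mono Set.subset_union_left
      have h1 : μ (A ∪ B) - μ A ≤ 0 := h0 ▸ le_max_left _ _
      have h2 : μ (A ∪ B) - μ B ≤ 0 := h0 ▸ le_max_right _ _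
      have hAU : A = A ∪ B := by
        rcases (Set.subset_union_left (s := A) (t := B)).ssubset_or_eq with h | h
        · exact absurd (hb A (A ∪ B) hA hAc hUn hUc h) (by linarith)
        · exact h
      have hBU : B = A ∪ B := by
        rcases (Set.subset_union_right (s := A) (t := B)).ssubset_or_eq with h | h
        · exact absurd (hb B (A ∪ B) hB hBc hUn hUc h) (by linarith)
        · exact h
      exact hAU.trans hBU.symm
    · intro h; subst h
      rw [hd, Set.union_self]
      simp
  · intro A B hA hAc hB hBc
    rw [hd, hd, Set.union_comm, max_comm]
  · intro A B C hA hAc hB hBc hC hCc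
    have hABc : IsClosed (A ∪ B) := hAc.union hBc
    have hBCc : IsClosed (B ∪ C) := hBc.union hCc
    have hABn : (A ∪ B).Nonempty := hA.mono Set.subset_union_left
    have hBCn : (B ∪ C).Nonempty := hB.mono Set.subset_union_left
    have hACn : (A ∪ C).Nonempty := hA.mono Set.subset_union_left
    have hACc : IsClosed (A ∪ C) := hAc.union hCc
    have hIc : IsClosed ((A ∪ B) ∩ (B ∪ C)) := hABc.inter hBCc
    have hIn : ((A ∪ B) ∩ (B ∪ C)).Nonempty :=
      hB.mono (Set.subset_inter Set.subset_union_right Set.subset_union_left)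
    have hUc : IsClosed ((A ∪ B) ∪ (B ∪ C)) := hABc.union hBCc
    have hUn : ((A ∪ B) ∪ (B ∪ C)).Nonempty := hABn.mono Set.subset_union_left
    have h1 : μ (A ∪ C) ≤ μ ((A ∪ B) ∪ (B ∪ C)) := by
      apply mono _ _ hACn hACc hUn hUc
      intro x hx
      rcases hx with hx | hx
      · exact Or.inl (Or.inl hx)
      · exact Or.inr (Or.inr hx)
    have h2 : μ ((A ∪ B) ∪ (B ∪ C)) ≤ μ (A ∪ B) + μ (B ∪ C) - μ ((A ∪ B) ∩ (B ∪ C)) :=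
      hc _ _ hABn hABc hBCn hBCc hIn
    have h3 : μ B ≤ μ ((A ∪ B) ∩ (B ∪ C)) :=
      mono B _ hB hBc hIn hIc
        (Set.subset_inter Set.subset_union_right Set.subset_union_left)
    have key : μ (A ∪ C) ≤ μ (A ∪ B) + μ (B ∪ C) - μ B := by linarith
    rw [hd, hd, hd]
    have hmaxAB1 : μ (A ∪ B) - μ A ≤ max (μ (A ∪ B) - μ A) (μ (A ∪ B) - μ B) :=
      le_max_left _ _
    have hmaxAB2 : μ (A ∪ B) - μ B ≤ max (μ (A ∪ B) - μ A) (μ (A ∪ B) - μ B) :=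
      le_max_right _ _
    have hmaxBC1 : μ (B ∪ C) - μ B ≤ max (μ (B ∪ C) - μ B) (μ (B ∪ C) - μ C) :=
      le_max_left _ _
    have hmaxBC2 : μ (B ∪ C) - μ C ≤ max (μ (B ∪ C) - μ B) (μ (B ∪ C) - μ C) :=
      le_max_right _ _
    apply max_le <;> linarith
end

section
/- The Whitney metric d_μ is topologically equivalent to the Hausdorff metric on 2^X: a sequence of nonempty closed subsets converges in d_μ if and only if it converges in d_H. -/
open Metric Filter Topology TopologicalSpace

/-!
Nonempty closed subsets of the compact space `X` are exactly the points of the compact metric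
space `NonemptyCompacts X`, whose distance is the Hausdorff distance. For fixed `A₀`, the map
`K ↦ d_μ(K, A₀)` is continuous on it (μ is continuous and `K ↦ K ∪ A₀` is 1-Lipschitz) and, by
strict monotonicity of `μ`, vanishes only at `A₀`. On a compact space, a continuous map whose
fibre over `f a` is `{a}` detects convergence to `a`: every cluster point of a sequence is sent
to the limit `f a` of its image, hence equals `a`.
-/

theorem Continuous.tendsto_comp_nhds_iff_of_fiber_eq {α β ι : Type*} [TopologicalSpace α]
    [CompactSpace α] [TopologicalSpace β] [T2Space β] {f : α → β} (hf : Continuous f) {a : α}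
    (ha : ∀ x, f x = f a → x = a) {u : ι → α} {l : Filter ι} :
    Tendsto (f ∘ u) l (𝓝 (f a)) ↔ Tendsto u l (𝓝 a) := by
  refine ⟨fun h => tendsto_nhds_of_unique_mapClusterPt fun x hx => ha x ?_,
    (hf.tendsto a).comp⟩
  exact eq_of_nhds_neBot ((hx.continuousAt_comp hf.continuousAt).neBot.mono (inf_le_inf_left _ h))

def whitneyDist {X : Type*} (μ : Set X → ℝ) (A B : Set X) : ℝ :=
  max (μ (A ∪ B) - μ A) (μ (A ∪ B) - μ B)

@[simp]
theorem whitneyDist_self {X : Type*} (μ : Set X → ℝ) (A : Set X) : whitneyDist μ A A = 0 := by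
  simp [whitneyDist]

section Whitney

variable {X : Type*} [TopologicalSpace X] {μ : Set X → ℝ}

theorem subset_of_apply_union_le
    (hμ : ∀ A B : Set X, A.Nonempty → IsClosed A → B.Nonempty → IsClosed B → A ⊂ B → μ A < μ B)
    {A B : Set X} (hA : A.Nonempty) (hAc : IsClosed A) (hBc : IsClosed B)
    (h : μ (A ∪ B) ≤ μ A) : B ⊆ A := by
  by_contra hBA
  exact (hμ A (A ∪ B) hA hAc (hA.mono Set.subset_union_left) (hAc.union hBc)
    (Set.ssubset_union_left_iff.2 hBA)).not_ge h

theorem eq_of_whitneyDist_le_zero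
    (hμ : ∀ A B : Set X, A.Nonempty → IsClosed A → B.Nonempty → IsClosed B → A ⊂ B → μ A < μ B)
    {A B : Set X} (hA : A.Nonempty) (hAc : IsClosed A) (hB : B.Nonempty) (hBc : IsClosed B)
    (h : whitneyDist μ A B ≤ 0) : A = B := by
  obtain ⟨hAB, hBA⟩ := max_le_iff.1 h
  refine (subset_of_apply_union_le hμ hB hBc hAc ?_).antisymm
    (subset_of_apply_union_le hμ hA hAc hBc (by linarith))
  rw [Set.union_comm]
  linarith

end Whitney

section Hausdorff

variable {X : Type*} [MetricSpace X] {μ : Set X → ℝ}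

theorem continuous_apply_nonemptyCompacts
    (hμ : ∀ A : Set X, A.Nonempty → IsClosed A → ∀ ε > 0, ∃ δ > 0,
      ∀ B : Set X, B.Nonempty → IsClosed B → hausdorffDist A B < δ → |μ A - μ B| < ε) :
    Continuous fun K : NonemptyCompacts X => μ K := by
  refine Metric.continuous_iff.2 fun K ε hε => ?_
  obtain ⟨δ, hδ, hK⟩ := hμ K K.nonempty K.isCompact.isClosed ε hε
  refine ⟨δ, hδ, fun L hL => ?_⟩
  rw [NonemptyCompacts.dist_eq, hausdorffDist_comm] at hL
  rw [Real.dist_eq, abs_sub_comm]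
  exact hK L L.nonempty L.isCompact.isClosed hL

theorem continuous_whitneyDist_nonemptyCompacts
    (hμ : Continuous fun K : NonemptyCompacts X => μ K) (K₀ : NonemptyCompacts X) :
    Continuous fun K : NonemptyCompacts X => whitneyDist μ K K₀ := by
  have hsup : Continuous fun K : NonemptyCompacts X => μ ↑(K ⊔ K₀) :=
    hμ.comp <| NonemptyCompacts.lipschitz_sup.continuous.comp <|
      continuous_id.prodMk continuous_const
  simp only [NonemptyCompacts.coe_sup] at hsup
  exact (hsup.sub hμ).max (hsup.sub continuous_const)

end Hausdorff

theorem whitney_metric_equiv_hausdorff_general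
    {X : Type*} [MetricSpace X] [CompactSpace X]
    (μ : Set X → ℝ)
    (hb : ∀ A B : Set X, A.Nonempty → IsClosed A → B.Nonempty → IsClosed B →
      A ⊂ B → μ A < μ B)
    -- continuity of μ with respect to the Hausdorff metric
    (hcont : ∀ A : Set X, A.Nonempty → IsClosed A → ∀ ε > 0, ∃ δ > 0,
      ∀ B : Set X, B.Nonempty → IsClosed B → hausdorffDist A B < δ →
        |μ A - μ B| < ε)
    (dμ : Set X → Set X → ℝ)
    (hd : ∀ A B : Set X, dμ A B = max (μ (A ∪ B) - μ A) (μ (A ∪ B) - μ B))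
    (A : ℕ → Set X) (A₀ : Set X)
    (hAn : ∀ n, (A n).Nonempty ∧ IsClosed (A n))
    (hA₀ : A₀.Nonempty ∧ IsClosed A₀) :
    Tendsto (fun n => dμ (A n) A₀) atTop (nhds 0) ↔
      Tendsto (fun n => hausdorffDist (A n) A₀) atTop (nhds 0) := by
  let K (n : ℕ) : NonemptyCompacts X := ⟨⟨A n, (hAn n).2.isCompact⟩, (hAn n).1⟩
  let K₀ : NonemptyCompacts X := ⟨⟨A₀, hA₀.2.isCompact⟩, hA₀.1⟩
  have hf := continuous_whitneyDist_nonemptyCompacts (continuous_apply_nonemptyCompacts hcont) K₀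
  have hfiber (L : NonemptyCompacts X) (hL : whitneyDist μ L K₀ = whitneyDist μ K₀ K₀) : L = K₀ :=
    NonemptyCompacts.ext <| eq_of_whitneyDist_le_zero hb L.nonempty L.isCompact.isClosed
      hA₀.1 hA₀.2 (hL.trans (whitneyDist_self μ _)).le
  have key : Tendsto (fun n => whitneyDist μ (K n) K₀) atTop (𝓝 (whitneyDist μ K₀ K₀)) ↔
      Tendsto K atTop (𝓝 K₀) :=
    hf.tendsto_comp_nhds_iff_of_fiber_eq hfiber
  rw [whitneyDist_self, tendsto_iff_dist_tendsto_zero (f := K)] at key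
  simp only [NonemptyCompacts.dist_eq] at key
  simp only [hd]
  exact key

/-- The Whitney metric `d_μ` is topologically equivalent to the Hausdorff metric on
`2^X`: a sequence of nonempty closed subsets converges in `d_μ` if and only if it
converges in Hausdorff distance. -/
theorem whitney_metric_equiv_hausdorff
    {X : Type*} [MetricSpace X] [CompactSpace X] [ConnectedSpace X] [Nonempty X]
    (μ : Set X → ℝ)
    (ha : ∀ x : X, μ {x} = 0)
    (hb : ∀ A B : Set X, A.Nonempty → IsClosed A → B.Nonempty → IsClosed B →
      A ⊂ B → μ A < μ B)
    (hc : ∀ A B : Set X, A.Nonempty → IsClosed A → B.Nonempty → IsClosed B →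
      (A ∩ B).Nonempty → μ (A ∪ B) ≤ μ A + μ B - μ (A ∩ B))
    -- continuity of μ with respect to the Hausdorff metric
    (hcont : ∀ A : Set X, A.Nonempty → IsClosed A → ∀ ε > 0, ∃ δ > 0,
      ∀ B : Set X, B.Nonempty → IsClosed B → hausdorffDist A B < δ →
        |μ A - μ B| < ε)
    (dμ : Set X → Set X → ℝ)
    (hd : ∀ A B : Set X, dμ A B = max (μ (A ∪ B) - μ A) (μ (A ∪ B) - μ B))
    (A : ℕ → Set X) (A₀ : Set X)
    (hAn : ∀ n, (A n).Nonempty ∧ IsClosed (A n))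
    (hA₀ : A₀.Nonempty ∧ IsClosed A₀) :
    Tendsto (fun n => dμ (A n) A₀) atTop (nhds 0) ↔
      Tendsto (fun n => hausdorffDist (A n) A₀) atTop (nhds 0) :=
  whitney_metric_equiv_hausdorff_general μ hb hcont dμ hd A A₀ hAn hA₀
end

section
/- In a homogeneous continuum X, if K is an ample subcontinuum and L is a subcontinuum with K ⊆ L, then L is ample. -/
open Set Metric TopologicalSpace

section Aux

variable {X : Type*} [MetricSpace X] [CompactSpace X] [Nonempty X]

/-- If a homeomorphism moves every point less than `ε`, so does its inverse. -/
lemma symm_move (h : X ≃ₜ X) {ε : ℝ} (hm : ∀ z, dist (h z) z < ε) :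
    ∀ z, dist (h.symm z) z < ε := by
  intro z
  have := hm (h.symm z)
  rwa [h.apply_symm_apply, dist_comm] at this

/-- There is a countable family of homeomorphisms of a compact metric space which
approximates every homeomorphism (together with its inverse) uniformly. -/
lemma exists_countable_homeo_approx :
    ∃ D : Set (X ≃ₜ X), D.Countable ∧ ∀ (h : X ≃ₜ X) (η : ℝ), 0 < η →
      ∃ g ∈ D, (∀ z, dist (g z) (h z) < η) ∧ (∀ z, dist (g.symm z) (h.symm z) < η) := by
  classical
  let φ : (X ≃ₜ X) → C(X, X) × C(X, X) :=
    fun h => (⟨h, h.continuous⟩, ⟨h.symm, h.symm.continuous⟩)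
  let S : Set (C(X, X) × C(X, X)) := Set.range φ
  obtain ⟨D0, hD0c, hD0d⟩ := TopologicalSpace.exists_countable_dense ↥S
  refine ⟨(fun b : ↥S => b.2.choose) '' D0, hD0c.image _, ?_⟩
  intro h η hη
  have ht : φ h ∈ S := ⟨h, rfl⟩
  have hcl : (⟨φ h, ht⟩ : ↥S) ∈ closure D0 := hD0d _
  obtain ⟨b, hbD0, hbdist⟩ := Metric.mem_closure_iff.1 hcl η hη
  have hbd' : dist (b : C(X, X) × C(X, X)) (φ h) < η := by
    rw [dist_comm]; simpa [Subtype.dist_eq] using hbdist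
  refine ⟨b.2.choose, ⟨b, hbD0, rfl⟩, ?_, ?_⟩
  · intro z
    have hspec : φ b.2.choose = (b : C(X, X) × C(X, X)) := b.2.choose_spec
    have h1 : dist (φ b.2.choose).1 (φ h).1 < η := by
      rw [hspec]
      calc dist (b : C(X, X) × C(X, X)).1 (φ h).1 ≤ dist (b : C(X, X) × C(X, X)) (φ h) :=
            le_max_left _ _ |>.trans (le_of_eq (Prod.dist_eq).symm)
        _ < η := hbd'
    have := ContinuousMap.dist_apply_le_dist (f := (φ b.2.choose).1) (g := (φ h).1) z
    exact lt_of_le_of_lt this h1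
  · intro z
    have hspec : φ b.2.choose = (b : C(X, X) × C(X, X)) := b.2.choose_spec
    have h1 : dist (φ b.2.choose).2 (φ h).2 < η := by
      rw [hspec]
      calc dist (b : C(X, X) × C(X, X)).2 (φ h).2 ≤ dist (b : C(X, X) × C(X, X)) (φ h) :=
            le_max_right _ _ |>.trans (le_of_eq (Prod.dist_eq).symm)
        _ < η := hbd'
    have := ContinuousMap.dist_apply_le_dist (f := (φ b.2.choose).2) (g := (φ h).2) z
    exact lt_of_le_of_lt this h1

/-- Effros-type lemma: in a homogeneous compact metric space, the set of points
reachable from `y` by homeomorphisms moving every point less than `ε` is dense in a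
neighbourhood of `y`. -/
lemma effros_dense (hhom : ∀ x y : X, ∃ h : X ≃ₜ X, h x = y) (y : X) {ε : ℝ} (hε : 0 < ε) :
    ∃ P : Set X, IsOpen P ∧ y ∈ P ∧
      P ⊆ closure {w | ∃ h : X ≃ₜ X, (∀ z, dist (h z) z < ε) ∧ h y = w} := by
  classical
  set ε' := ε / 2 with hε'def
  have hε' : 0 < ε' := by positivity
  set O' : Set X := {w | ∃ h : X ≃ₜ X, (∀ z, dist (h z) z < ε') ∧ h y = w} with hO'def
  obtain ⟨D, hDc, hDapprox⟩ := exists_countable_homeo_approx (X := X)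
  haveI : Countable ↥D := hDc.to_subtype
  -- Baire category: one translate of `closure O'` has nonempty interior
  have hcover : ⋃ d : ↥D, (⇑d.1 '' closure O') = univ := by
    apply eq_univ_of_forall
    intro w
    obtain ⟨h, hhy⟩ := hhom y w
    obtain ⟨g, hgD, hg1, hg2⟩ := hDapprox h ε' hε'
    have hv : g.symm (h y) ∈ O' := by
      refine ⟨h.trans g.symm, ?_, rfl⟩
      intro z
      have := hg2 (h z)
      simpa [Homeomorph.symm_apply_apply] using this
    refine mem_iUnion.2 ⟨⟨g, hgD⟩, g.symm (h y), subset_closure hv, ?_⟩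
    simp [hhy]
  have hclosed : ∀ d : ↥D, IsClosed (⇑d.1 '' closure O') :=
    fun d => (isClosed_closure.isCompact.image d.1.continuous).isClosed
  obtain ⟨d₀, hd₀⟩ := nonempty_interior_of_iUnion_of_closed hclosed hcover
  have hQne : (interior (closure O')).Nonempty := by
    have himg : ⇑d₀.1 '' interior (closure O') = interior (⇑d₀.1 '' closure O') :=
      Homeomorph.image_interior _ _
    obtain ⟨q, hq⟩ := hd₀
    rw [← himg] at hq
    obtain ⟨q', hq', _⟩ := hq
    exact ⟨q', hq'⟩
  obtain ⟨q, hq⟩ := hQne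
  -- pick an actual orbit point in the interior
  have : (interior (closure O') ∩ O').Nonempty :=
    _root_.mem_closure_iff.1 (interior_subset hq) _ isOpen_interior hq
  obtain ⟨w₀, hw₀Q, v₀, hv₀mov, hv₀y⟩ := this
  refine ⟨⇑v₀.symm '' interior (closure O'), (Homeomorph.isOpenMap v₀.symm) _ isOpen_interior,
    ⟨w₀, hw₀Q, by rw [← hv₀y]; exact v₀.symm_apply_apply y⟩, ?_⟩
  rintro _ ⟨q', hq', rfl⟩
  have hsub : ⇑v₀.symm '' O' ⊆ {w | ∃ h : X ≃ₜ X, (∀ z, dist (h z) z < ε) ∧ h y = w} := by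
    rintro _ ⟨_, ⟨u, humov, rfl⟩, rfl⟩
    refine ⟨u.trans v₀.symm, ?_, rfl⟩
    intro z
    calc dist (v₀.symm (u z)) z ≤ dist (v₀.symm (u z)) (u z) + dist (u z) z := dist_triangle _ _ _
      _ < ε' + ε' := add_lt_add (symm_move v₀ hv₀mov (u z)) (humov z)
      _ = ε := by rw [hε'def]; ring
  have : v₀.symm q' ∈ closure (⇑v₀.symm '' O') := by
    rw [← Homeomorph.image_closure]
    exact ⟨q', interior_subset hq', rfl⟩
  exact closure_mono hsub this

/-- A connected component of a closed set is closed. -/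
lemma isClosed_connectedComponentIn_of_isClosed {F : Set X} (hF : IsClosed F) {x : X}
    (hx : x ∈ F) : IsClosed (connectedComponentIn F x) := by
  have hconn : IsConnected (connectedComponentIn F x) :=
    isConnected_connectedComponentIn_iff.2 hx
  have hsub : closure (connectedComponentIn F x) ⊆ connectedComponentIn F x :=
    hconn.isPreconnected.closure.subset_connectedComponentIn
      (subset_closure (mem_connectedComponentIn hx))
      (closure_minimal (connectedComponentIn_subset _ _) hF)
  exact isClosed_of_closure_subset hsub

end Aux

/-- A subcontinuum `K` of `X` is ample if for every open `U ⊇ K` there is a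
subcontinuum `L` with `K ⊆ int L ⊆ L ⊆ U`. -/
def IsAmple {X : Type*} [TopologicalSpace X] (K : Set X) : Prop :=
  ∀ U : Set X, IsOpen U → K ⊆ U →
    ∃ L : Set X, L.Nonempty ∧ IsCompact L ∧ IsConnected L ∧
      K ⊆ interior L ∧ L ⊆ U

/-- In a homogeneous continuum, if `K` is an ample subcontinuum and `L` is a
subcontinuum with `K ⊆ L`, then `L` is ample. -/
theorem ample_upward_closed_of_homogeneous
    {X : Type*} [MetricSpace X] [CompactSpace X] [ConnectedSpace X] [Nonempty X]
    (hhom : ∀ x y : X, ∃ h : X ≃ₜ X, h x = y)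
    (K L : Set X)
    (hK : K.Nonempty) (hKc : IsCompact K) (hKconn : IsConnected K)
    (hL : L.Nonempty) (hLc : IsCompact L) (hLconn : IsConnected L)
    (hKample : IsAmple K) (hKL : K ⊆ L) :
    IsAmple L := by
  intro U hU hLU
  obtain ⟨δ, hδ, hδU⟩ := hLc.exists_thickening_subset_open hU hLU
  set V₁ := Metric.thickening (δ / 4) L with hV₁def
  set V₂ := Metric.thickening (δ / 2) L with hV₂def
  have hV₁o : IsOpen V₁ := Metric.isOpen_thickening
  have hV₂o : IsOpen V₂ := Metric.isOpen_thickening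
  have hLV₁ : L ⊆ V₁ := Metric.self_subset_thickening (by positivity) L
  have hLV₂ : L ⊆ V₂ := Metric.self_subset_thickening (by positivity) L
  set F₁ := closure V₁ with hF₁def
  set F₂ := closure V₂ with hF₂def
  have hF₁V₂ : F₁ ⊆ V₂ :=
    (Metric.closure_thickening_subset_cthickening _ _).trans
      (Metric.cthickening_subset_thickening' (by positivity) (by linarith) L)
  have hF₂U : F₂ ⊆ U :=
    (Metric.closure_thickening_subset_cthickening _ _).trans
      ((Metric.cthickening_subset_thickening' hδ (by linarith) L).trans hδU)
  have hF₁c : IsCompact F₁ := isClosed_closure.isCompact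
  have hF₂closed : IsClosed F₂ := isClosed_closure
  obtain ⟨x₀, hx₀K⟩ := hK
  have hx₀L : x₀ ∈ L := hKL hx₀K
  have hx₀F₁ : x₀ ∈ F₁ := subset_closure (hLV₁ hx₀L)
  have hx₀F₂ : x₀ ∈ F₂ := subset_closure (hLV₂ hx₀L)
  set C₁ := connectedComponentIn F₁ x₀ with hC₁def
  set C₂ := connectedComponentIn F₂ x₀ with hC₂def
  have hLF₁ : L ⊆ F₁ := hLV₁.trans subset_closure
  have hLF₂ : L ⊆ F₂ := hLV₂.trans subset_closure
  have hLC₁ : L ⊆ C₁ := hLconn.isPreconnected.subset_connectedComponentIn hx₀L hLF₁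
  have hC₂closed : IsClosed C₂ := isClosed_connectedComponentIn_of_isClosed hF₂closed hx₀F₂
  -- small continuum neighbourhood of K inside V₁
  obtain ⟨S, hSne, hSc, hSconn, hKiS, hSV₁⟩ := hKample V₁ hV₁o (hKL.trans hLV₁)
  have hSC₁ : S ⊆ C₁ := by
    have hu : IsPreconnected (S ∪ L) :=
      IsPreconnected.union x₀ (interior_subset (hKiS hx₀K)) hx₀L
        hSconn.isPreconnected hLconn.isPreconnected
    have := hu.subset_connectedComponentIn (Or.inl (interior_subset (hKiS hx₀K)))
      (Set.union_subset (hSV₁.trans subset_closure) hLF₁)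
    exact Set.subset_union_left.trans this
  obtain ⟨r₀, hr₀, hball⟩ := Metric.isOpen_iff.1 isOpen_interior x₀ (hKiS hx₀K)
  obtain ⟨m, hm, hmV₂⟩ := hF₁c.exists_thickening_subset_open hV₂o hF₁V₂
  set ε := min r₀ m with hεdef
  have hε : 0 < ε := lt_min hr₀ hm
  have hLiC₂ : L ⊆ interior C₂ := by
    intro y hy
    by_contra hyint
    obtain ⟨P, hPo, hyP, hPcl⟩ := effros_dense hhom y hε
    have hPnot : ¬P ⊆ C₂ := fun hsub => hyint (mem_interior.2 ⟨P, hsub, hPo, hyP⟩)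
    obtain ⟨p, hpP, hpC⟩ := Set.not_subset.1 hPnot
    have hpcl : p ∈ closure {w | ∃ h : X ≃ₜ X, (∀ z, dist (h z) z < ε) ∧ h y = w} := hPcl hpP
    have hmeet : ((P \ C₂) ∩ {w | ∃ h : X ≃ₜ X, (∀ z, dist (h z) z < ε) ∧ h y = w}).Nonempty :=
      _root_.mem_closure_iff.1 hpcl (P \ C₂) (hPo.sdiff hC₂closed) ⟨hpP, hpC⟩
    obtain ⟨w, ⟨hwP, hwC⟩, h, hmov, hhy⟩ := hmeet
    have hC₁conn : IsConnected C₁ := isConnected_connectedComponentIn_iff.2 hx₀F₁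
    have hx₀C₁ : x₀ ∈ C₁ := mem_connectedComponentIn hx₀F₁
    have hx₀img : x₀ ∈ ⇑h '' C₁ := by
      refine ⟨h.symm x₀, ?_, h.apply_symm_apply x₀⟩
      have : dist (h.symm x₀) x₀ < r₀ :=
        lt_of_lt_of_le (symm_move h hmov x₀) (min_le_left _ _)
      exact hSC₁ (interior_subset (hball this))
    have hEconn : IsPreconnected (C₁ ∪ ⇑h '' C₁) :=
      IsPreconnected.union x₀ hx₀C₁ hx₀img hC₁conn.isPreconnected
        (hC₁conn.isPreconnected.image _ h.continuous.continuousOn)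
    have hEF₂ : C₁ ∪ ⇑h '' C₁ ⊆ F₂ := by
      apply Set.union_subset
      · exact (connectedComponentIn_subset F₁ x₀).trans (hF₁V₂.trans subset_closure)
      · rintro _ ⟨c, hc, rfl⟩
        refine subset_closure (hmV₂ ?_)
        exact Metric.mem_thickening_iff.2
          ⟨c, connectedComponentIn_subset F₁ x₀ hc,
            lt_of_lt_of_le (hmov c) (min_le_right _ _)⟩
    have hEC₂ : C₁ ∪ ⇑h '' C₁ ⊆ C₂ :=
      hEconn.subset_connectedComponentIn (Or.inl hx₀C₁) hEF₂
    exact hwC (hEC₂ (Or.inr ⟨y, hLC₁ hy, hhy⟩))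
  exact ⟨C₂, ⟨x₀, mem_connectedComponentIn hx₀F₂⟩, hC₂closed.isCompact,
    isConnected_connectedComponentIn_iff.2 hx₀F₂, hLiC₂,
    (connectedComponentIn_subset F₂ x₀).trans hF₂U⟩
end

section
/- In a hereditarily indecomposable continuum P with Whitney map μ, for every point x ∈ P and every t ∈ [0, μ(P)] there exists a unique subcontinuum Q of P with x ∈ Q and μ(Q) = t. -/
open Metric Set

lemma compact_connectedComponentIn {P : Type*} [MetricSpace P] [CompactSpace P]
    {K : Set P} (hK : IsClosed K) {x0 : P} (hx0 : x0 ∈ K) :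
    IsCompact (connectedComponentIn K x0) := by
  haveI : CompactSpace K := isCompact_iff_compactSpace.mp (hK.isCompact)
  rw [connectedComponentIn_eq_image hx0]
  exact (isClosed_connectedComponent.isCompact).image continuous_subtype_val

lemma bump {P : Type*} [MetricSpace P] [CompactSpace P] [ConnectedSpace P]
    {K : Set P} (hK : IsClosed K) (hKne : K ≠ univ) {x0 : P} (hx0 : x0 ∈ K) :
    (connectedComponentIn K x0 ∩ frontier K).Nonempty := by
  rw [Set.nonempty_iff_ne_empty]
  intro hcon
  haveI : CompactSpace K := isCompact_iff_compactSpace.mp (hK.isCompact)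
  set p : K := ⟨x0, hx0⟩
  set Fr : Set K := Subtype.val ⁻¹' frontier K with hFr
  have hFrc : IsCompact Fr :=
    ((isClosed_frontier.preimage continuous_subtype_val).isCompact)
  have hdisj : Fr ∩ ⋂ Z : { Z : Set K // IsClopen Z ∧ p ∈ Z }, (Z : Set K) = ∅ := by
    rw [← connectedComponent_eq_iInter_isClopen p]
    ext z
    simp only [mem_inter_iff, mem_empty_iff_false, iff_false, not_and]
    intro hz hz2
    have : (z : P) ∈ connectedComponentIn K x0 ∩ frontier K := by
      constructor
      · rw [connectedComponentIn_eq_image hx0]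
        exact ⟨z, hz2, rfl⟩
      · exact hz
    rw [hcon] at this
    exact this
  obtain ⟨tf, htf⟩ := hFrc.elim_finite_subfamily_closed _
    (fun Z : { Z : Set K // IsClopen Z ∧ p ∈ Z } => Z.2.1.1) hdisj
  set Z : Set K := ⋂ i ∈ tf, (i : Set K) with hZdef
  have hZclopen : IsClopen Z := isClopen_biInter_finset (fun i _ => i.2.1)
  have hpZ : p ∈ Z := mem_iInter₂.mpr fun i _ => i.2.2
  have hZFr : Z ∩ Fr = ∅ := by
    rw [inter_comm]; exact htf
  set W : Set P := Subtype.val '' Z with hW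
  have hWK : W ⊆ K := by rintro w ⟨z, _, rfl⟩; exact z.2
  have hWfr : ∀ w ∈ W, w ∉ frontier K := by
    rintro w ⟨z, hzZ, rfl⟩ hwfr
    have : z ∈ Z ∩ Fr := ⟨hzZ, hwfr⟩
    rw [hZFr] at this; exact this
  have hWint : W ⊆ interior K := by
    intro w hw
    have h1 : w ∈ K := hWK hw
    have h2 := hWfr w hw
    rw [hK.frontier_eq] at h2
    by_contra hint
    exact h2 ⟨h1, hint⟩
  have hWclosed : IsClosed W :=
    ((hZclopen.1.isCompact).image continuous_subtype_val).isClosed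
  have hWopen : IsOpen W := by
    obtain ⟨U, hU, hUZ⟩ := isOpen_induced_iff.mp hZclopen.2
    have hWeq : W = U ∩ interior K := by
      apply Subset.antisymm
      · intro w hw
        refine ⟨?_, hWint hw⟩
        obtain ⟨z, hz, rfl⟩ := hw
        rw [← hUZ] at hz; exact hz
      · rintro w ⟨hwU, hwint⟩
        have hwK : w ∈ K := interior_subset hwint
        exact ⟨⟨w, hwK⟩, by rw [← hUZ]; exact hwU, rfl⟩
    rw [hWeq]
    exact hU.inter isOpen_interior
  have : W = ∅ ∨ W = univ := isClopen_iff.mp ⟨hWclosed, hWopen⟩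
  rcases this with h | h
  · have : x0 ∈ W := ⟨p, hpZ, rfl⟩
    rw [h] at this; exact this
  · exact hKne (univ_subset_iff.mp (h ▸ hWK))

/-- In a hereditarily indecomposable continuum `P` (any two subcontinua that meet are
comparable by inclusion) with a Whitney map `μ`, for every point `x ∈ P` and every
`t ∈ [0, μ(P)]` there is a unique subcontinuum `Q` with `x ∈ Q` and `μ Q = t`. -/
theorem unique_whitney_subcontinuum_through_point
    {P : Type*} [MetricSpace P] [CompactSpace P] [ConnectedSpace P] [Nonempty P]
    (hHI : ∀ A B : Set P, A.Nonempty → IsCompact A → IsConnected A →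
      B.Nonempty → IsCompact B → IsConnected B → (A ∩ B).Nonempty →
      A ⊆ B ∨ B ⊆ A)
    (μ : Set P → ℝ)
    (hμcont : ∀ A : Set P, A.Nonempty → IsClosed A → ∀ ε > 0, ∃ δ > 0,
      ∀ B : Set P, B.Nonempty → IsClosed B → hausdorffDist A B < δ →
        |μ A - μ B| < ε)
    (hμ0 : ∀ x : P, μ {x} = 0)
    (hμmono : ∀ A B : Set P, A.Nonempty → IsClosed A → B.Nonempty → IsClosed B →
      A ⊂ B → μ A < μ B)
    (x : P) (t : ℝ) (ht : t ∈ Set.Icc 0 (μ Set.univ)) :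
    ∃! Q : Set P, Q.Nonempty ∧ IsCompact Q ∧ IsConnected Q ∧ x ∈ Q ∧ μ Q = t := by
  classical
  obtain ⟨ht0, ht1⟩ := ht
  -- monotonicity for subsets
  have hle : ∀ A B : Set P, A.Nonempty → IsClosed A → B.Nonempty → IsClosed B →
      A ⊆ B → μ A ≤ μ B := by
    intro A B hA hAc hB hBc hAB
    rcases eq_or_ssubset_of_subset hAB with h | h
    · rw [h]
    · exact (hμmono A B hA hAc hB hBc h).le
  -- the family of admissible continua
  set F : Set (Set P) := {A | A.Nonempty ∧ IsCompact A ∧ IsConnected A ∧ x ∈ A ∧ μ A ≤ t}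
    with hFdef
  have hxF : {x} ∈ F :=
    ⟨singleton_nonempty x, isCompact_singleton, isConnected_singleton,
      mem_singleton x, by rw [hμ0]; exact ht0⟩
  set S : Set ℝ := μ '' F with hSdef
  have hSne : S.Nonempty := ⟨μ {x}, {x}, hxF, rfl⟩
  have hSbdd : BddAbove S := ⟨t, by rintro r ⟨A, hA, rfl⟩; exact hA.2.2.2.2⟩
  set s := sSup S with hsdef
  have hst : s ≤ t := csSup_le hSne (by rintro r ⟨A, hA, rfl⟩; exact hA.2.2.2.2)
  -- choose approximating continua
  have hA : ∀ n : ℕ, ∃ A ∈ F, s - 1 / (n + 1) < μ A := by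
    intro n
    have h1 : s - 1 / (n + 1 : ℝ) < s := by
      have : (0:ℝ) < 1 / (n + 1) := by positivity
      linarith
    obtain ⟨r, hr, hr2⟩ := exists_lt_of_lt_csSup hSne h1
    obtain ⟨A, hAF, rfl⟩ := hr
    exact ⟨A, hAF, hr2⟩
  choose A hAF hAμ using hA
  -- turn into a monotone chain
  set B : ℕ → Set P := fun n =>
    Nat.rec (A 0) (fun n Bn => if A (n+1) ⊆ Bn then Bn else A (n+1)) n with hBdef
  have hB0 : B 0 = A 0 := rfl
  have hBsucc : ∀ n, B (n+1) = if A (n+1) ⊆ B n then B n else A (n+1) := fun n => rfl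
  have hBF : ∀ n, B n ∈ F := by
    intro n
    induction n with
    | zero => exact hAF 0
    | succ n ih =>
      rw [hBsucc]
      split
      · exact ih
      · exact hAF (n+1)
  have hBA : ∀ n, A n ⊆ B n := by
    intro n
    cases n with
    | zero => exact subset_rfl
    | succ n =>
      rw [hBsucc]
      split
      · assumption
      · exact subset_rfl
  have hBmono : Monotone B := by
    refine monotone_nat_of_le_succ fun n => ?_
    show B n ⊆ B (n+1)
    rw [hBsucc]
    split
    · exact subset_rfl
    · rename_i h
      have h1 := hBF n
      have h2 := hAF (n+1)
      rcases hHI (A (n+1)) (B n) h2.1 h2.2.1 h2.2.2.1 h1.1 h1.2.1 h1.2.2.1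
        ⟨x, h2.2.2.2.1, h1.2.2.2.1⟩ with h3 | h3
      · exact absurd h3 h
      · exact h3
  -- the limit continuum
  set Q : Set P := closure (⋃ n, B n) with hQdef
  have hxQ : x ∈ Q := subset_closure (mem_iUnion.mpr ⟨0, (hBF 0).2.2.2.1⟩)
  have hQne : Q.Nonempty := ⟨x, hxQ⟩
  have hQclosed : IsClosed Q := isClosed_closure
  have hQcomp : IsCompact Q := hQclosed.isCompact
  have hQconn : IsConnected Q := by
    refine ⟨hQne, IsPreconnected.closure ?_⟩
    apply isPreconnected_iUnion
    · exact ⟨x, mem_iInter.mpr fun n => (hBF n).2.2.2.1⟩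
    · exact fun n => (hBF n).2.2.1.2
  have hBQ : ∀ n, B n ⊆ Q := fun n => (subset_iUnion B n).trans subset_closure
  -- Hausdorff approximation of Q by the chain
  have hconv : ∀ δ > (0:ℝ), ∃ n, hausdorffDist Q (B n) < δ := by
    intro δ hδ
    have hx4 : (0:ℝ) < δ / 4 := by linarith
    have hcl : ∀ q : P, ∃ n, q ∈ Q → ∃ u ∈ B n, dist q u < δ / 4 := by
      intro q
      by_cases hq : q ∈ Q
      · obtain ⟨u, hu, hdu⟩ := Metric.mem_closure_iff.mp hq (δ/4) hx4
        obtain ⟨n, hn⟩ := mem_iUnion.mp hu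
        exact ⟨n, fun _ => ⟨u, hn, hdu⟩⟩
      · exact ⟨0, fun h => absurd h hq⟩
    choose m hm using hcl
    obtain ⟨tf, htf1, htf2⟩ := hQcomp.elim_nhds_subcover (fun q => ball q (δ/4))
      (fun q _ => ball_mem_nhds q hx4)
    set N := tf.sup m with hN
    refine ⟨N, ?_⟩
    have hBN : (B N).Nonempty := (hBF N).1
    have h1 : ∀ z ∈ Q, infDist z (B N) ≤ δ / 2 := by
      intro z hz
      obtain ⟨q, hqtf, hqball⟩ := mem_iUnion₂.mp (htf2 hz)
      obtain ⟨u, hu, hdu⟩ := hm q (htf1 q hqtf)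
      have huN : u ∈ B N := hBmono (Finset.le_sup hqtf) hu
      have : dist z u ≤ dist z q + dist q u := dist_triangle z q u
      have hzq : dist z q < δ / 4 := mem_ball.mp hqball
      calc infDist z (B N) ≤ dist z u := infDist_le_dist_of_mem huN
        _ ≤ dist z q + dist q u := dist_triangle z q u
        _ ≤ δ / 2 := by linarith
    have h2 : ∀ z ∈ B N, infDist z Q ≤ δ / 2 := by
      intro z hz
      rw [infDist_zero_of_mem (hBQ N hz)]
      linarith
    have := hausdorffDist_le_of_infDist (by linarith : (0:ℝ) ≤ δ/2) h1 h2
    linarith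
  -- μ Q = s
  have hQub : μ Q ≤ s := by
    by_contra hcon
    push_neg at hcon
    obtain ⟨δ, hδ, hδ2⟩ := hμcont Q hQne hQclosed (μ Q - s) (by linarith)
    obtain ⟨n, hn⟩ := hconv δ hδ
    have := hδ2 (B n) (hBF n).1 (hBF n).2.1.isClosed hn
    have hBns : μ (B n) ≤ s := le_csSup hSbdd ⟨B n, hBF n, rfl⟩
    rw [abs_lt] at this
    linarith [this.2]
  have hQlb : s ≤ μ Q := by
    by_contra hcon
    push_neg at hcon
    obtain ⟨n, hn⟩ := exists_nat_one_div_lt (by linarith : (0:ℝ) < s - μ Q)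
    have h1 : s - 1 / (n + 1 : ℝ) < μ (A n) := hAμ n
    have h2 : μ (A n) ≤ μ (B n) :=
      hle _ _ (hAF n).1 (hAF n).2.1.isClosed (hBF n).1 (hBF n).2.1.isClosed (hBA n)
    have h3 : μ (B n) ≤ μ Q :=
      hle _ _ (hBF n).1 (hBF n).2.1.isClosed hQne hQclosed (hBQ n)
    linarith
  have hQμ : μ Q = s := le_antisymm hQub hQlb
  -- s = t, else bump
  have hseq : s = t := by
    by_contra hne
    have hslt : s < t := lt_of_le_of_ne hst hne
    have hQuniv : Q ≠ univ := by
      intro h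
      rw [h] at hQμ
      linarith
    obtain ⟨p, hp⟩ : ∃ p, p ∉ Q := by
      by_contra h
      push_neg at h
      exact hQuniv (eq_univ_of_forall h)
    have hdp : 0 < infDist p Q := (hQclosed.notMem_iff_infDist_pos hQne).mp hp
    obtain ⟨δ, hδ, hδ2⟩ := hμcont Q hQne hQclosed (t - s) (by linarith)
    set ε := min (δ / 2) (infDist p Q / 2) with hε
    have hεpos : 0 < ε := lt_min (by linarith) (by linarith)
    set K : Set P := {y | infDist y Q ≤ ε} with hK
    have hKclosed : IsClosed K :=
      isClosed_le (continuous_infDist_pt Q) continuous_const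
    have hQK : Q ⊆ K := fun y hy => by
      simp only [hK, mem_setOf_eq, infDist_zero_of_mem hy]; exact hεpos.le
    have hKuniv : K ≠ univ := by
      intro h
      have : p ∈ K := h ▸ mem_univ p
      have : infDist p Q ≤ ε := this
      have : ε ≤ infDist p Q / 2 := min_le_right _ _
      linarith
    have hxK : x ∈ K := hQK hxQ
    set C := connectedComponentIn K x with hC
    have hQC : Q ⊆ C :=
      hQconn.isPreconnected.subset_connectedComponentIn hxQ hQK
    have hCcomp : IsCompact C := compact_connectedComponentIn hKclosed hxK
    have hCconn : IsConnected C :=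
      ⟨⟨x, mem_connectedComponentIn hxK⟩, isPreconnected_connectedComponentIn⟩
    obtain ⟨y, hyC, hyfr⟩ := bump hKclosed hKuniv hxK
    have hyQ : y ∉ Q := by
      intro hyQ
      have hyint : y ∈ interior K := by
        have : y ∈ {z | infDist z Q < ε} := by
          simp only [mem_setOf_eq, infDist_zero_of_mem hyQ]; exact hεpos
        have hopen : IsOpen {z | infDist z Q < ε} :=
          isOpen_lt (continuous_infDist_pt Q) continuous_const
        have hsub : {z : P | infDist z Q < ε} ⊆ interior K :=
          interior_maximal (fun z (hz : infDist z Q < ε) => le_of_lt hz) hopen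
        exact hsub this
      exact hyfr.2 hyint
    have hQssC : Q ⊂ C := by
      refine ⟨hQC, fun h => hyQ (h hyC)⟩
    have hCclosed : IsClosed C := hCcomp.isClosed
    have hCne : C.Nonempty := hCconn.1
    have hμQC : μ Q < μ C := hμmono Q C hQne hQclosed hCne hCclosed hQssC
    -- C is Hausdorff-close to Q
    have hCK : C ⊆ K := connectedComponentIn_subset K x
    have hHD : hausdorffDist Q C < δ := by
      have h1 : ∀ z ∈ Q, infDist z C ≤ δ / 2 := by
        intro z hz
        rw [infDist_zero_of_mem (hQC hz)]
        linarith
      have h2 : ∀ z ∈ C, infDist z Q ≤ δ / 2 := by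
        intro z hz
        have : infDist z Q ≤ ε := hCK hz
        have : ε ≤ δ / 2 := min_le_left _ _
        linarith [hCK hz]
      have := hausdorffDist_le_of_infDist (by linarith : (0:ℝ) ≤ δ/2) h1 h2
      linarith
    have habs := hδ2 C hCne hCclosed hHD
    rw [abs_lt] at habs
    have hμCt : μ C ≤ t := by rw [hQμ] at habs; linarith [habs.1]
    have hCF : C ∈ F := ⟨hCne, hCcomp, hCconn, hQC hxQ, hμCt⟩
    have : μ C ≤ s := le_csSup hSbdd ⟨C, hCF, rfl⟩
    rw [hQμ] at hμQC
    linarith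
  -- Existence established; now uniqueness
  refine ⟨Q, ⟨hQne, hQcomp, hQconn, hxQ, by rw [hQμ, hseq]⟩, ?_⟩
  rintro R ⟨hRne, hRcomp, hRconn, hxR, hRμ⟩
  rcases hHI R Q hRne hRcomp hRconn hQne hQcomp hQconn ⟨x, hxR, hxQ⟩ with h | h
  · rcases eq_or_ssubset_of_subset h with h | h
    · exact h
    · have := hμmono R Q hRne hRcomp.isClosed hQne hQclosed h
      rw [hRμ, hQμ, hseq] at this
      exact absurd this (lt_irrefl t)
  · rcases eq_or_ssubset_of_subset h with h | h
    · exact h.symm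
    · have := hμmono Q R hQne hQclosed hRne hRcomp.isClosed h
      rw [hRμ, hQμ, hseq] at this
      exact absurd this (lt_irrefl t)
end
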